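/- arXiv:1309.7745 — 9 statements merged into one kernel-verified Lean document; each statement's English description precedes it below -/
import Mathlib

section
/- Let c₁, c₂ be complex numbers with max(|Re c₁|, |Im c₁|) ≤ 1 and max(|Re c₂|, |Im c₂|) ≤ 1. Then max(|Re(c₁+c₂)|, |Im(c₁+c₂)|) > 1 and max(|Re(c₁-c₂)|, |Im(c₁-c₂)|) > 1 holds if and only if |Re c₁| + |Re c₂| > 1, |Im c₁| + |Im c₂| > 1, and (Re c₁)(Re c₂)(Im c₁)(Im c₂) < 0. -/
/-! If `|u|, |v| ≤ 1`, then one of `|u + v|`, `|u - v|` equals `||u| - |v|| ≤ 1`, while the other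
equals `|u| + |v|`; which one depends on the sign of `u * v`. So `1 < |u + v|` forces `0 < u * v`
and `1 < |u - v|` forces `u * v < 0`. For the two signed combinations of `c₁, c₂` both to leave the
unit square, the real parts must exceed `1` in one combination and the imaginary parts in the other,
so `Re c₁ Re c₂` and `Im c₁ Im c₂` have opposite signs and both coordinate sums exceed `1`. -/

open Complex

section

variable {R : Type*} [CommRing R] [LinearOrder R] [IsStrictOrderedRing R] {u v : R}

theorem abs_add_le_one_of_mul_nonpos (hu : |u| ≤ 1) (hv : |v| ≤ 1) (huv : u * v ≤ 0) :
    |u + v| ≤ 1 := by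
  rw [abs_le] at *
  rcases mul_nonpos_iff.mp huv with ⟨_, _⟩ | ⟨_, _⟩ <;> constructor <;> linarith

theorem one_lt_abs_add_iff (hu : |u| ≤ 1) (hv : |v| ≤ 1) :
    1 < |u + v| ↔ 0 < u * v ∧ 1 < |u| + |v| := by
  constructor
  · intro h
    refine ⟨?_, h.trans_le (abs_add_le u v)⟩
    by_contra! huv
    exact (abs_add_le_one_of_mul_nonpos hu hv huv).not_gt h
  · rintro ⟨huv, h⟩
    rwa [(abs_add_eq_add_abs_iff u v).mpr]
    rcases mul_pos_iff.mp huv with ⟨hu, hv⟩ | ⟨hu, hv⟩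
    exacts [Or.inl ⟨hu.le, hv.le⟩, Or.inr ⟨hu.le, hv.le⟩]

theorem one_lt_abs_sub_iff (hu : |u| ≤ 1) (hv : |v| ≤ 1) :
    1 < |u - v| ↔ u * v < 0 ∧ 1 < |u| + |v| := by
  have := one_lt_abs_add_iff hu ((abs_neg v).symm ▸ hv : |-v| ≤ 1)
  rwa [← sub_eq_add_neg, mul_neg, neg_pos, abs_neg] at this

theorem one_lt_max_abs_add_and_max_abs_sub_iff {a b x y : R} (ha : |a| ≤ 1) (hb : |b| ≤ 1)
    (hx : |x| ≤ 1) (hy : |y| ≤ 1) :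
    (1 < max |a + b| |x + y| ∧ 1 < max |a - b| |x - y|) ↔
      (1 < |a| + |b| ∧ 1 < |x| + |y| ∧ a * b * x * y < 0) := by
  simp only [lt_max_iff, one_lt_abs_add_iff, one_lt_abs_sub_iff, ha, hb, hx, hy]
  rw [mul_assoc (a * b), mul_neg_iff (a := a * b)]
  have hab : 0 < a * b → ¬a * b < 0 := lt_asymm
  have hxy : 0 < x * y → ¬x * y < 0 := lt_asymm
  tauto

end

theorem stmt_0 (c₁ c₂ : ℂ)
    (h₁ : max |c₁.re| |c₁.im| ≤ 1) (h₂ : max |c₂.re| |c₂.im| ≤ 1) :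
    (1 < max |(c₁ + c₂).re| |(c₁ + c₂).im| ∧ 1 < max |(c₁ - c₂).re| |(c₁ - c₂).im|) ↔
      (1 < |c₁.re| + |c₂.re| ∧ 1 < |c₁.im| + |c₂.im| ∧ c₁.re * c₂.re * c₁.im * c₂.im < 0) := by
  rw [max_le_iff] at h₁ h₂
  rw [add_re, add_im, sub_re, sub_im]
  exact one_lt_max_abs_add_and_max_abs_sub_iff h₁.1 h₂.1 h₁.2 h₂.2
end

section
/- Let c₁, c₂, c₃, c₄, c₅ be complex numbers with ‖cₙ‖ ≤ 1 for all 1 ≤ n ≤ 5, and such that for each 1 ≤ n ≤ 4 both ‖cₙ + cₙ₊₁‖ > 1 and ‖cₙ - cₙ₊₁‖ > 1. Then there exist signs x₁, ..., x₅ ∈ {-1, 1} such that ‖x₁c₁ + x₂c₂ + x₃c₃ + x₄c₄ + x₅c₅‖ ≤ 2. -/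
/-!
Flip the sign of each `cₙ` so that its real part is nonnegative; the hypotheses are invariant under
such flips. For two neighbours with nonnegative real parts, `|Re(cₙ - cₙ₊₁)| ≤ 1`, so the
imaginary parts must differ by more than `1`; then `|Im(cₙ + cₙ₊₁)| ≤ 1`, so the real parts sum to
more than `1`. Hence the real parts are nonnegative with `Re c₃ + Re c₄ > 1`, and the imaginary
parts alternate in sign with gaps larger than `1`. The signs `(+, +, -, -, +)` bound both the real
and the imaginary part of the sum by `2`.
-/

open Complex Finset

def supNorm (z : ℂ) : ℝ := max |z.re| |z.im|

def Incombinable (z w : ℂ) : Prop := 1 < supNorm (z + w) ∧ 1 < supNorm (z - w)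

lemma supNorm_ofReal_mul (r : ℝ) (z : ℂ) : supNorm (r * z) = |r| * supNorm z := by
  simp [supNorm, abs_mul, mul_max_of_nonneg]

lemma supNorm_neg (z : ℂ) : supNorm (-z) = supNorm z := by
  simp [supNorm]

lemma Incombinable.neg_right {z w : ℂ} (h : Incombinable z w) : Incombinable z (-w) := by
  rw [Incombinable, ← sub_eq_add_neg, sub_neg_eq_add]
  exact h.symm

lemma Incombinable.neg_left {z w : ℂ} (h : Incombinable z w) : Incombinable (-z) w := by
  rw [Incombinable, neg_add_eq_sub, ← supNorm_neg, neg_sub, ← neg_add', supNorm_neg]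
  exact h.symm

lemma Incombinable.ofReal_mul {z w : ℂ} (h : Incombinable z w) {s t : ℝ} (hs : |s| = 1)
    (ht : |t| = 1) : Incombinable (s * z) (t * w) := by
  rcases (abs_eq zero_le_one).mp hs with rfl | rfl <;>
    rcases (abs_eq zero_le_one).mp ht with rfl | rfl <;>
    simp only [ofReal_one, ofReal_neg, one_mul, neg_one_mul]
  exacts [h, h.neg_right, h.neg_left, h.neg_left.neg_right]

lemma abs_add_le_one_of_one_lt_abs_sub {u v : ℝ} (hu : |u| ≤ 1) (hv : |v| ≤ 1)
    (h : 1 < |u - v|) : |u + v| ≤ 1 := by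
  rw [abs_le] at hu hv ⊢
  rcases lt_abs.mp h with h | h <;> constructor <;> linarith

lemma Incombinable.one_lt_abs_im_sub {z w : ℂ} (h : Incombinable z w) (hz : supNorm z ≤ 1)
    (hw : supNorm w ≤ 1) (hz₀ : 0 ≤ z.re) (hw₀ : 0 ≤ w.re) : 1 < |z.im - w.im| := by
  have hre : |z.re - w.re| ≤ 1 :=
    abs_sub_le_of_nonneg_of_le hz₀ ((le_abs_self _).trans (le_of_max_le_left hz)) hw₀
      ((le_abs_self _).trans (le_of_max_le_left hw))
  simpa [supNorm, hre.not_gt] using h.2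

lemma Incombinable.one_lt_re_add {z w : ℂ} (h : Incombinable z w) (hz : supNorm z ≤ 1)
    (hw : supNorm w ≤ 1) (hz₀ : 0 ≤ z.re) (hw₀ : 0 ≤ w.re) : 1 < z.re + w.re := by
  have him : |z.im + w.im| ≤ 1 :=
    abs_add_le_one_of_one_lt_abs_sub (le_of_max_le_right hz) (le_of_max_le_right hw)
      (h.one_lt_abs_im_sub hz hw hz₀ hw₀)
  have hadd := h.1
  simp only [supNorm, add_re, add_im, lt_max_iff, him.not_gt, or_false] at hadd
  rwa [abs_of_nonneg (add_nonneg hz₀ hw₀)] at hadd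

def signPattern : Fin 5 → ℝ := ![1, 1, -1, -1, 1]

lemma abs_signPattern (n : Fin 5) : |signPattern n| = 1 := by
  fin_cases n <;> simp [signPattern]

lemma sum_signPattern_mul (p : Fin 5 → ℝ) :
    ∑ n, signPattern n * p n = p 0 + p 1 - p 2 - p 3 + p 4 := by
  simp [Fin.sum_univ_five, signPattern]
  ring

lemma abs_sum_signPattern_mul_le_two_of_nonneg {p : Fin 5 → ℝ} (h₀ : ∀ n, 0 ≤ p n)
    (h₁ : ∀ n, p n ≤ 1) (h₂₃ : 1 < p 2 + p 3) : |∑ n, signPattern n * p n| ≤ 2 := by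
  rw [sum_signPattern_mul, abs_le]
  constructor <;> linarith [h₀ 0, h₀ 1, h₀ 4, h₁ 0, h₁ 1, h₁ 2, h₁ 3, h₁ 4]

lemma abs_sum_signPattern_mul_le_two_of_gaps {q : Fin 5 → ℝ} (hq : ∀ n, |q n| ≤ 1)
    (hgap : ∀ n : Fin 4, 1 < |q n.castSucc - q n.succ|) : |∑ n, signPattern n * q n| ≤ 2 := by
  have hq' := fun n => abs_le.mp (hq n)
  have h₀₁ : 1 < |q 0 - q 1| := hgap 0
  have h₁₂ : 1 < |q 1 - q 2| := hgap 1
  have h₂₃ : 1 < |q 2 - q 3| := hgap 2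
  have h₃₄ : 1 < |q 3 - q 4| := hgap 3
  rw [sum_signPattern_mul, abs_le]
  rcases lt_abs.mp h₀₁ with _ | _ <;> rcases lt_abs.mp h₁₂ with _ | _ <;>
    rcases lt_abs.mp h₂₃ with _ | _ <;> rcases lt_abs.mp h₃₄ with _ | _ <;>
    constructor <;> linarith [hq' 0, hq' 1, hq' 2, hq' 3, hq' 4]

theorem stmt_1 (c : Fin 5 → ℂ)
    (hle : ∀ n, max |(c n).re| |(c n).im| ≤ 1)
    (hadd : ∀ n : Fin 4, 1 < max |(c n.castSucc + c n.succ).re| |(c n.castSucc + c n.succ).im|)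
    (hsub : ∀ n : Fin 4, 1 < max |(c n.castSucc - c n.succ).re| |(c n.castSucc - c n.succ).im|) :
    ∃ x : Fin 5 → ℝ, (∀ n, x n = 1 ∨ x n = -1) ∧
      max |(∑ n, (x n : ℂ) * c n).re| |(∑ n, (x n : ℂ) * c n).im| ≤ 2 := by
  set s : Fin 5 → ℝ := fun n => if 0 ≤ (c n).re then 1 else -1
  have hs : ∀ n, |s n| = 1 := fun n => by by_cases h : 0 ≤ (c n).re <;> simp [s, h]
  set d : Fin 5 → ℂ := fun n => s n * c n
  have hd : ∀ n, supNorm (d n) ≤ 1 := fun n => by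
    rw [supNorm_ofReal_mul, hs, one_mul]
    exact hle n
  have hd₀ : ∀ n, 0 ≤ (d n).re := fun n => by
    by_cases h : 0 ≤ (c n).re
    · simp [d, s, h]
    · simpa [d, s, h] using (not_le.mp h).le
  have hpair : ∀ n : Fin 4, Incombinable (d n.castSucc) (d n.succ) := fun n =>
    Incombinable.ofReal_mul ⟨hadd n, hsub n⟩ (hs _) (hs _)
  refine ⟨fun n => signPattern n * s n, fun n => ?_, ?_⟩
  · rw [← abs_eq zero_le_one, abs_mul, abs_signPattern, hs, one_mul]
  have hsum : ∑ n, ((signPattern n * s n : ℝ) : ℂ) * c n = ∑ n, (signPattern n : ℂ) * d n := by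
    simp only [d, ofReal_mul, mul_assoc]
  rw [hsum, re_sum, im_sum]
  simp only [re_ofReal_mul, im_ofReal_mul]
  exact max_le
    (abs_sum_signPattern_mul_le_two_of_nonneg hd₀
      (fun n => (le_abs_self _).trans (le_of_max_le_left (hd n)))
      ((hpair 2).one_lt_re_add (hd _) (hd _) (hd₀ _) (hd₀ _)))
    (abs_sum_signPattern_mul_le_two_of_gaps (fun n => le_of_max_le_right (hd n))
      (fun n => (hpair n).one_lt_abs_im_sub (hd _) (hd _) (hd₀ _) (hd₀ _)))
end

section
/- Let c₁, ..., c_N be complex numbers with ‖cₙ‖ ≤ 1 for all n. Then there exist signs x₁, ..., x_N ∈ {-1, 1} such that for every 1 ≤ k ≤ N, ‖∑_{n=1}^{k} xₙcₙ‖ ≤ 5. -/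
/-!
Bárány–Grinberg. In a real vector space of dimension `d`, maintain for each time `t` coefficients
`f` with `|f i| ≤ 1`, supported on `1..t`, with `∑ f i • v i = 0` and at most `d` coordinates
floating (`|f i| < 1`); the others are frozen at `±1`. To pass to `t + 1`, give `v (t + 1)` the
coefficient `0`; if `d + 1` coordinates now float, their vectors satisfy a linear relation, and
moving `f` along it until one more coordinate reaches `±1` restores the invariant without touching
the frozen ones. Let `x` be the signs of the coefficients at the final time `N`: they agree with
every coordinate frozen at an earlier time `k`, so `∑_{i ≤ k} x i • v i = ∑ (x i - f i) • v i`
over the at most `d` coordinates floating at time `k`, which has seminorm at most `2 d`. For `ℂ`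
(`d = 2`) with `max |re| |im|`, this gives `4 ≤ 5`.
-/

open Complex Finset

lemma exists_abs_add_mul_eq_one {ι : Type*} {S : Finset ι} {f g : ι → ℝ}
    (hf : ∀ i ∈ S, |f i| ≤ 1) (hg : ∃ i ∈ S, g i ≠ 0) :
    ∃ s : ℝ, (∀ i ∈ S, |f i + s * g i| ≤ 1) ∧ ∃ i ∈ S, |f i + s * g i| = 1 := by
  obtain ⟨j, hj, hgj⟩ := hg
  set φ : ℝ → ℝ := fun s ↦ S.sup' ⟨j, hj⟩ fun i ↦ |f i + s * g i|
  have hφ : Continuous φ := Continuous.finset_sup'_apply _ fun i _ ↦ by fun_prop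
  have h0 : φ 0 ≤ 1 := Finset.sup'_le _ _ (by simpa using hf)
  have h1 : 1 ≤ φ (2 / |g j|) := by
    refine le_sup'_of_le _ hj ?_
    have habs : |2 / |g j| * g j| = 2 := by
      rw [abs_mul, abs_div, abs_abs, abs_two, div_mul_cancel₀ _ (abs_ne_zero.mpr hgj)]
    have := abs_sub (f j + 2 / |g j| * g j) (f j)
    rw [add_sub_cancel_left, habs] at this
    linarith [hf j hj]
  obtain ⟨s, -, hs⟩ := intermediate_value_Icc (by positivity) hφ.continuousOn ⟨h0, h1⟩
  obtain ⟨i, hi, hmax⟩ := S.exists_mem_eq_sup' ⟨j, hj⟩ fun i ↦ |f i + s * g i|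
  exact ⟨s, fun i hi ↦ hs ▸ le_sup' (fun i ↦ |f i + s * g i|) hi, i, hi, hmax ▸ hs⟩

lemma exists_nontrivial_relation_on_of_finrank_lt_card {K ι V : Type*} [DivisionRing K]
    [AddCommGroup V] [Module K V] [FiniteDimensional K V] (v : ι → V) {S : Finset ι}
    (hS : Module.finrank K V < #S) :
    ∃ g : ι → K, (∀ i ∉ S, g i = 0) ∧ ∑ i ∈ S, g i • v i = 0 ∧ ∃ i ∈ S, g i ≠ 0 := by
  classical
  obtain ⟨g, hg, i, hi, hgi⟩ :=
    (not_linearIndepOn_finset_iff (v := v)).mp fun h ↦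
      hS.not_ge (by simpa using h.fintype_card_le_finrank)
  refine ⟨fun i ↦ if i ∈ S then g i else 0, fun i hi ↦ if_neg hi, ?_, i, hi, by simpa [hi]⟩
  rw [← hg]
  exact sum_congr rfl fun i hi ↦ by simp only [if_pos hi]

section BaranyGrinberg

variable {V : Type*} [AddCommGroup V] [Module ℝ V]

noncomputable def floating (f : ℕ → ℝ) (t : ℕ) : Finset ℕ := {i ∈ Icc 1 t | |f i| < 1}

lemma floating_subset (f : ℕ → ℝ) (t : ℕ) : floating f t ⊆ Icc 1 t := filter_subset _ _

lemma abs_eq_one_of_notMem_floating {f : ℕ → ℝ} {t i : ℕ} (hf : |f i| ≤ 1) (hi : i ∈ Icc 1 t)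
    (hni : i ∉ floating f t) : |f i| = 1 :=
  hf.antisymm (not_lt.mp fun h ↦ hni (mem_filter.mpr ⟨hi, h⟩))

lemma floating_succ_subset (f : ℕ → ℝ) (t : ℕ) :
    floating f (t + 1) ⊆ insert (t + 1) (floating f t) := by
  intro i hi
  simp only [floating, mem_filter, mem_Icc, mem_insert] at hi ⊢
  rcases eq_or_lt_of_le hi.1.2 with h | h
  · exact .inl h
  · exact .inr ⟨⟨hi.1.1, by omega⟩, hi.2⟩

structure IsBaranyGrinbergState (v : ℕ → V) (t : ℕ) (f : ℕ → ℝ) : Prop where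
  abs_le_one : ∀ i, |f i| ≤ 1
  eq_zero_of_lt : ∀ i, t < i → f i = 0
  sum_smul_eq_zero : ∑ i ∈ Icc 1 t, f i • v i = 0
  card_floating_le : #(floating f t) ≤ Module.finrank ℝ V

namespace IsBaranyGrinbergState

lemma zero (v : ℕ → V) : IsBaranyGrinbergState v 0 0 where
  abs_le_one := by simp
  eq_zero_of_lt _ _ := rfl
  sum_smul_eq_zero := by simp
  card_floating_le := by simp [floating]

variable {v : ℕ → V} {t : ℕ} {f : ℕ → ℝ}

lemma exists_succ [FiniteDimensional ℝ V] (hf : IsBaranyGrinbergState v t f) :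
    ∃ f', IsBaranyGrinbergState v (t + 1) f' ∧ ∀ i, |f i| = 1 → f' i = f i := by
  set S := floating f (t + 1)
  have hsum : ∑ i ∈ Icc 1 (t + 1), f i • v i = 0 := by
    rw [sum_Icc_succ_top (by omega), hf.sum_smul_eq_zero, hf.eq_zero_of_lt _ (lt_add_one t),
      zero_smul, add_zero]
  have hcard : #S ≤ Module.finrank ℝ V + 1 :=
    (card_le_card (floating_succ_subset f t)).trans
      ((card_insert_le _ _).trans (Nat.succ_le_succ hf.card_floating_le))
  by_cases hSd : #S ≤ Module.finrank ℝ V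
  · exact ⟨f, ⟨hf.abs_le_one, fun i hi ↦ hf.eq_zero_of_lt i (by omega), hsum, hSd⟩,
      fun _ _ ↦ rfl⟩
  -- too many floating coordinates: move along a linear relation among them until one freezes
  obtain ⟨g, hg0, hg, hgne⟩ := exists_nontrivial_relation_on_of_finrank_lt_card v (not_le.mp hSd)
  obtain ⟨s, hs1, i₀, hi₀, hs⟩ := exists_abs_add_mul_eq_one (fun i _ ↦ hf.abs_le_one i) hgne
  have hS : S ⊆ Icc 1 (t + 1) := floating_subset f (t + 1)
  refine ⟨fun i ↦ f i + s * g i, ⟨fun i ↦ ?_, fun i hi ↦ ?_, ?_, ?_⟩, fun i hi ↦ ?_⟩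
  · by_cases hiS : i ∈ S
    · exact hs1 i hiS
    · simpa [hg0 i hiS] using hf.abs_le_one i
  · rw [hf.eq_zero_of_lt i (by omega), hg0 i fun h ↦ by have := mem_Icc.mp (hS h); omega]
    simp
  · rw [sum_subset hS (f := fun i ↦ g i • v i) fun i _ hi ↦ by rw [hg0 i hi, zero_smul]] at hg
    simp only [add_smul, mul_smul, sum_add_distrib, ← smul_sum, hsum, hg, smul_zero, add_zero]
  · have hsub : floating (fun i ↦ f i + s * g i) (t + 1) ⊆ S.erase i₀ := by
      intro i hi
      obtain ⟨hiI, hlt⟩ := mem_filter.mp hi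
      by_cases hiS : i ∈ S
      · exact mem_erase.mpr ⟨fun h ↦ by rw [h, hs] at hlt; exact hlt.false, hiS⟩
      · simp only [hg0 i hiS, mul_zero, add_zero] at hlt
        exact absurd (mem_filter.mpr ⟨hiI, hlt⟩) hiS
    have := card_le_card hsub
    rw [card_erase_of_mem hi₀] at this
    omega
  · have hiS : i ∉ S := fun h ↦ (mem_filter.mp h).2.ne hi
    simp [hg0 i hiS]

lemma sum_smul_eq_sum_floating (hf : IsBaranyGrinbergState v t f) {x : ℕ → ℝ}
    (hx : ∀ i, |f i| = 1 → x i = f i) :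
    ∑ i ∈ Icc 1 t, x i • v i = ∑ i ∈ floating f t, (x i - f i) • v i := by
  calc ∑ i ∈ Icc 1 t, x i • v i = ∑ i ∈ Icc 1 t, (x i - f i) • v i := by
        simp only [sub_smul, sum_sub_distrib, hf.sum_smul_eq_zero, sub_zero]
    _ = ∑ i ∈ floating f t, (x i - f i) • v i := by
        refine (sum_subset (floating_subset f t) fun i hi hni ↦ ?_).symm
        rw [hx i (abs_eq_one_of_notMem_floating (hf.abs_le_one i) hi hni), sub_self, zero_smul]

end IsBaranyGrinbergState

lemma exists_baranyGrinbergStates [FiniteDimensional ℝ V] (v : ℕ → V) :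
    ∃ F : ℕ → ℕ → ℝ, (∀ t, IsBaranyGrinbergState v t (F t)) ∧
      ∀ i k m, k ≤ m → |F k i| = 1 → F m i = F k i := by
  choose next hnext hfix using fun t (f : {f // IsBaranyGrinbergState v t f}) ↦ f.2.exists_succ
  let F : (t : ℕ) → {f // IsBaranyGrinbergState v t f} :=
    Nat.rec ⟨0, .zero v⟩ fun t f ↦ ⟨next t f, hnext t f⟩
  refine ⟨fun t ↦ (F t).1, fun t ↦ (F t).2, fun i k m hkm hi ↦ ?_⟩
  induction m, hkm using Nat.le_induction with
  | base => rfl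
  | succ m _ ih =>
    have ih : (F m).1 i = (F k).1 i := ih
    exact (hfix m (F m) i (ih ▸ hi)).trans ih

theorem exists_signs_seminorm_sum_le [FiniteDimensional ℝ V] (p : Seminorm ℝ V) (N : ℕ) (v : ℕ → V)
    (hv : ∀ n ∈ Icc 1 N, p (v n) ≤ 1) :
    ∃ x : ℕ → ℝ, (∀ n, x n = 1 ∨ x n = -1) ∧
      ∀ k ≤ N, p (∑ n ∈ Icc 1 k, x n • v n) ≤ 2 * Module.finrank ℝ V := by
  obtain ⟨F, hF, hfrozen⟩ := exists_baranyGrinbergStates v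
  set x : ℕ → ℝ := fun n ↦ if 0 ≤ F N n then 1 else -1
  have hx : ∀ n, x n = 1 ∨ x n = -1 := fun n ↦ by by_cases h : 0 ≤ F N n <;> simp [x, h]
  refine ⟨x, hx, fun k hk ↦ ?_⟩
  have hxF : ∀ i, |F k i| = 1 → x i = F k i := fun i hi ↦ by
    rcases abs_eq zero_le_one |>.mp hi with h | h <;> simp [x, hfrozen i k N hk hi, h]
  have hcoeff : ∀ i, |x i - F k i| ≤ 2 := fun i ↦ calc
    |x i - F k i| ≤ |x i| + |F k i| := abs_sub _ _
    _ ≤ 1 + 1 := add_le_add (by rcases hx i with h | h <;> simp [h]) ((hF k).abs_le_one i)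
    _ = 2 := one_add_one_eq_two
  rw [(hF k).sum_smul_eq_sum_floating hxF]
  calc p (∑ i ∈ floating (F k) k, (x i - F k i) • v i)
      ≤ ∑ i ∈ floating (F k) k, p ((x i - F k i) • v i) :=
        le_sum_of_subadditive p (map_zero p).le (map_add_le_add p) _ _
    _ ≤ ∑ _i ∈ floating (F k) k, (2 : ℝ) := sum_le_sum fun i hi ↦ by
        rw [map_smul_eq_mul, Real.norm_eq_abs]
        have hiN := Icc_subset_Icc_right hk (floating_subset _ k hi)
        exact (mul_le_mul (hcoeff i) (hv i hiN) (apply_nonneg p _) zero_le_two).trans_eq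
          (mul_one 2)
    _ ≤ 2 * Module.finrank ℝ V := by
        rw [sum_const, nsmul_eq_mul, mul_comm]
        gcongr
        exact_mod_cast (hF k).card_floating_le

end BaranyGrinberg

noncomputable def reImSupSeminorm : Seminorm ℝ ℂ :=
  (normSeminorm ℝ ℝ).comp reLm ⊔ (normSeminorm ℝ ℝ).comp imLm

lemma reImSupSeminorm_apply (z : ℂ) : reImSupSeminorm z = max |z.re| |z.im| := rfl

theorem stmt_2 (N : ℕ) (c : ℕ → ℂ)
    (hle : ∀ n, 1 ≤ n → n ≤ N → max |(c n).re| |(c n).im| ≤ 1) :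
    ∃ x : ℕ → ℝ, (∀ n, x n = 1 ∨ x n = -1) ∧
      ∀ k, 1 ≤ k → k ≤ N →
        max |(∑ n ∈ Finset.Icc 1 k, (x n : ℂ) * c n).re|
            |(∑ n ∈ Finset.Icc 1 k, (x n : ℂ) * c n).im| ≤ 5 := by
  obtain ⟨x, hx, hsum⟩ := exists_signs_seminorm_sum_le reImSupSeminorm N c
    fun n hn ↦ hle n (mem_Icc.mp hn).1 (mem_Icc.mp hn).2
  refine ⟨x, hx, fun k _ hk ↦ ?_⟩
  have := hsum k hk
  simp only [reImSupSeminorm_apply, finrank_real_complex, real_smul, Nat.cast_ofNat] at this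
  linarith
end

section
/- Let (cₙ = aₙ + ibₙ) be a sequence of complex numbers with cₙ → 0 and ∑|cₙ| = ∞. Then there exists t ∈ ℝ ∪ {∞} and a subsequence (c_{n_k}) with ∑_k |c_{n_k}| = ∞ such that a_{n_k}/b_{n_k} → t as k → ∞ (where t = ∞ means the ratios tend to infinity in absolute value). -/
/-!
Send each term to its ratio `aₙ / bₙ` in the compact space `EReal = [-∞, ∞]` (a term with
`bₙ = 0` gets the junk ratio `0`, as in the statement). By compactness there is a point `z`
each of whose neighbourhoods carries a non-summable part of `∑ ‖cₙ‖` (otherwise finitely many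
neighbourhoods with summable parts would cover everything). Along a
decreasing neighbourhood basis `Vₘ` of `z`, choose consecutive blocks of indices whose terms with
ratio in `Vₘ` have total weight at least `1`; these terms form the subsequence, and its ratios
tend to `z`. The three cases `z = -∞`, `z ∈ ℝ`, `z = +∞` give the conclusion.
-/
open Complex Filter Topology

lemma not_summable_of_forall_exists_one_le_sum_Ico {g : ℕ → ℝ}
    (h : ∀ N, ∃ M K, N ≤ M ∧ 1 ≤ ∑ i ∈ Finset.Ico M K, g i) : ¬ Summable g := by
  intro hg
  obtain ⟨s, hs⟩ := summable_iff_vanishing_norm.1 hg 1 one_pos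
  obtain ⟨M, K, hM, hK⟩ := h (s.sup id + 1)
  have hdisj : Disjoint (Finset.Ico M K) s := by
    refine Finset.disjoint_left.2 fun i hi his => ?_
    have : i ≤ s.sup id := Finset.le_sup (f := id) his
    have := (Finset.mem_Ico.1 hi).1
    omega
  have := (le_abs_self _).trans_lt (hs _ hdisj)
  linarith

lemma exists_one_le_sum_Ico_of_not_summable {g : ℕ → ℝ} (hg : 0 ≤ g) (hns : ¬ Summable g)
    (N : ℕ) : ∃ M, N ≤ M ∧ 1 ≤ ∑ i ∈ Finset.Ico N M, g i := by
  have htend := (not_summable_iff_tendsto_nat_atTop_of_nonneg hg).1 hns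
  obtain ⟨M, hM, hNM⟩ :=
    ((htend.eventually_ge_atTop (∑ i ∈ Finset.range N, g i + 1)).and (eventually_ge_atTop N)).exists
  refine ⟨M, hNM, ?_⟩
  rw [Finset.sum_Ico_eq_sub g hNM]
  linarith

lemma exists_strictMono_one_le_sum_Ico {g : ℕ → ℕ → ℝ} (hg : ∀ m, 0 ≤ g m)
    (hns : ∀ m, ¬ Summable (g m)) :
    ∃ N : ℕ → ℕ, StrictMono N ∧ ∀ m, 1 ≤ ∑ i ∈ Finset.Ico (N m) (N (m + 1)), g m i := by
  choose M hNM hM using fun m => exists_one_le_sum_Ico_of_not_summable (hg m) (hns m)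
  let N : ℕ → ℕ := fun m => Nat.rec 0 (fun k Nk => M k Nk) m
  have hblock : ∀ m, 1 ≤ ∑ i ∈ Finset.Ico (N m) (N (m + 1)), g m i := fun m => hM m (N m)
  refine ⟨N, strictMono_nat_of_lt_succ fun m => ?_, hblock⟩
  by_contra! hle
  have := hblock m
  rw [Finset.Ico_eq_empty_of_le hle, Finset.sum_empty] at this
  norm_num at this

lemma Set.infinite_of_not_summable_indicator {f : ℕ → ℝ} {T : Set ℕ}
    (h : ¬ Summable (T.indicator f)) : T.Infinite := fun hT =>
  h (summable_of_hasFiniteSupport (hT.subset Set.support_indicator_subset))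

lemma not_summable_comp_nth_of_not_summable_indicator {f : ℕ → ℝ} {T : Set ℕ}
    (h : ¬ Summable (T.indicator f)) : ¬ Summable (f ∘ Nat.nth (· ∈ T)) := by
  have hT := Set.infinite_of_not_summable_indicator h
  have hcomp : f ∘ Nat.nth (· ∈ T) = T.indicator f ∘ Nat.nth (· ∈ T) :=
    funext fun k => (Set.indicator_of_mem (Nat.nth_mem_of_infinite hT k) f).symm
  rw [hcomp]
  exact fun hs => h (((Nat.nth_strictMono hT).injective.summable_iff fun n hn =>
    Set.indicator_of_notMem (by rwa [Nat.range_nth_of_infinite hT] at hn) f).1 hs)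

lemma exists_strictMono_not_summable_comp_eventually_mem {f : ℕ → ℝ} (hf : 0 ≤ f)
    {S : ℕ → Set ℕ} (hS : Antitone S) (hns : ∀ m, ¬ Summable ((S m).indicator f)) :
    ∃ φ : ℕ → ℕ, StrictMono φ ∧ ¬ Summable (f ∘ φ) ∧ ∀ m, ∀ᶠ k in atTop, φ k ∈ S m := by
  obtain ⟨N, hN, hblock⟩ := exists_strictMono_one_le_sum_Ico
    (fun m => Set.indicator_nonneg fun n _ => hf n) hns
  let T : Set ℕ := {n | ∃ m, n ∈ S m ∧ n ∈ Set.Ico (N m) (N (m + 1))}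
  have hT : ¬ Summable (T.indicator f) := by
    refine not_summable_of_forall_exists_one_le_sum_Ico fun n => ⟨N n, N (n + 1), hN.le_apply, ?_⟩
    refine (hblock n).trans (Finset.sum_le_sum fun i hi => Set.indicator_apply_le' (fun hiS => ?_)
      fun _ => Set.indicator_nonneg (fun j _ => hf j) i)
    rw [Set.indicator_of_mem (show i ∈ T from ⟨n, hiS, Finset.mem_Ico.1 hi⟩)]
  have hTinf := Set.infinite_of_not_summable_indicator hT
  refine ⟨Nat.nth (· ∈ T), Nat.nth_strictMono hTinf,
    not_summable_comp_nth_of_not_summable_indicator hT, fun m => ?_⟩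
  filter_upwards [eventually_ge_atTop (N m)] with k hk
  obtain ⟨j, hjS, hjN, hjN'⟩ := Nat.nth_mem_of_infinite hTinf k
  have hmj : m ≤ j := by
    by_contra! hjm
    have := hN.monotone (show j + 1 ≤ m by omega)
    have := (Nat.nth_strictMono hTinf).le_apply (x := k)
    omega
  exact hS hmj hjS

lemma exists_forall_mem_nhds_not_summable_indicator {X : Type*} [TopologicalSpace X]
    [CompactSpace X] (u : ℕ → X) {f : ℕ → ℝ} (hf : 0 ≤ f) (hns : ¬ Summable f) :
    ∃ z, ∀ U ∈ 𝓝 z, ¬ Summable ((u ⁻¹' U).indicator f) := by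
  by_contra! h
  choose U hU hsum using h
  obtain ⟨t, -, hcover⟩ := isCompact_univ.elim_nhds_subcover U fun x _ => hU x
  refine hns (Summable.of_nonneg_of_le hf (fun n => ?_)
    (summable_sum (s := t) fun x _ => hsum x))
  obtain ⟨x, hx, hnx⟩ := Set.mem_iUnion₂.1 (hcover (Set.mem_univ (u n)))
  calc f n = (u ⁻¹' U x).indicator f n :=
        (Set.indicator_of_mem (show n ∈ u ⁻¹' U x from hnx) f).symm
    _ ≤ ∑ y ∈ t, (u ⁻¹' U y).indicator f n :=
      Finset.single_le_sum (f := fun y => (u ⁻¹' U y).indicator f n)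
        (fun y _ => Set.indicator_nonneg (fun j _ => hf j) n) hx

theorem exists_strictMono_not_summable_comp_tendsto {X : Type*} [TopologicalSpace X]
    [CompactSpace X] [FirstCountableTopology X] (u : ℕ → X) {f : ℕ → ℝ} (hf : 0 ≤ f)
    (hns : ¬ Summable f) :
    ∃ z, ∃ φ : ℕ → ℕ, StrictMono φ ∧ ¬ Summable (f ∘ φ) ∧ Tendsto (u ∘ φ) atTop (𝓝 z) := by
  obtain ⟨z, hz⟩ := exists_forall_mem_nhds_not_summable_indicator u hf hns
  obtain ⟨V, hV⟩ := (𝓝 z).exists_antitone_basis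
  obtain ⟨φ, hφ, hφns, hφV⟩ := exists_strictMono_not_summable_comp_eventually_mem hf
    (fun _ _ hmn => Set.preimage_mono (hV.antitone hmn)) fun m => hz _ (hV.mem m)
  exact ⟨z, φ, hφ, hφns, hV.1.tendsto_right_iff.2 fun m _ => hφV m⟩

theorem stmt_4_general (c : ℕ → ℂ)
    (hns : ¬ Summable (fun n => ‖c n‖)) :
    ∃ nk : ℕ → ℕ, StrictMono nk ∧
      ¬ Summable (fun k => ‖c (nk k)‖) ∧
      ((∃ t : ℝ, Tendsto (fun k => (c (nk k)).re / (c (nk k)).im) atTop (𝓝 t)) ∨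
        Tendsto (fun k => |(c (nk k)).re / (c (nk k)).im|) atTop atTop) := by
  obtain ⟨z, nk, hnk, hnkns, hlim⟩ := exists_strictMono_not_summable_comp_tendsto
    (fun n => ((c n).re / (c n).im : EReal)) (fun n => norm_nonneg (c n)) hns
  refine ⟨nk, hnk, hnkns, ?_⟩
  induction z using EReal.rec with
  | bot => exact .inr (tendsto_abs_atBot_atTop.comp (EReal.tendsto_coe_nhds_bot_iff.1 hlim))
  | coe t => exact .inl ⟨t, EReal.tendsto_coe.1 hlim⟩
  | top => exact .inr (tendsto_abs_atTop_atTop.comp (EReal.tendsto_coe_nhds_top_iff.1 hlim))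

theorem stmt_4 (c : ℕ → ℂ) (hc : Tendsto c atTop (𝓝 0))
    (hns : ¬ Summable (fun n => ‖c n‖)) :
    ∃ nk : ℕ → ℕ, StrictMono nk ∧
      ¬ Summable (fun k => ‖c (nk k)‖) ∧
      ((∃ t : ℝ, Tendsto (fun k => (c (nk k)).re / (c (nk k)).im) atTop (𝓝 t)) ∨
        Tendsto (fun k => |(c (nk k)).re / (c (nk k)).im|) atTop atTop) :=
  stmt_4_general c hns
end

section
/- Let (cₙ = aₙ + ibₙ) be a linearly non-summable sequence of complex numbers with cₙ → 0. Suppose there exists a subsequence (c_{n_k}) with ∑_k |c_{n_k}| = ∞ but ∑_k |a_{n_k}| < ∞ (or ∑_k |b_{n_k}| < ∞). Then R({cₙ}) is dense in ℂ. -/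
/-
Split the indices into a tail `S` of the subsequence, on which `∑ |Re c|` is as small as we like
while `∑ |Im c| = ∞`, and its complement, on which `∑ |Re c| = ∞` still. Greedy signs on `S`
steer the imaginary part of the sum to any prescribed value, moving the real part by at most
`∑_S |Re c|`. On the complement, a Dvoretzky–Hanani argument (the Bárány–Grinberg balancing
lemma in the plane, applied on blocks where `|c n| ≤ δ / 2 ^ j`) gives a convergent signing of
any tail with sum of norm at most `8 δ`, and greedy signs on the finitely many earlier terms
steer the real part to any prescribed value. Adding the two pieces reaches any point of `ℂ` up
to an arbitrarily small error. If instead `∑ |Im c|` is finite along the subsequence, rotate by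
`i`.
-/

open Complex Filter Topology

def rangeSet (c : ℕ → ℂ) : Set ℂ :=
  {z | ∃ x : ℕ → ℝ, (∀ n, x n = 1 ∨ x n = -1) ∧
    Tendsto (fun N => ∑ n ∈ Finset.range N, (x n : ℂ) * c n) atTop (𝓝 z)}

open Finset

lemma sum_range_mem_rangeSet {c : ℕ → ℂ} {M : ℕ} (hc : ∀ n ≥ M, c n = 0) {x : ℕ → ℝ}
    (hx : ∀ n, x n = 1 ∨ x n = -1) : ∑ n ∈ range M, (x n : ℂ) * c n ∈ rangeSet c :=
  ⟨x, hx, tendsto_atTop_of_eventually_const fun _ hN =>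
    eventually_constant_sum (fun n hn => by simp [hc n hn]) hN⟩

lemma add_mem_rangeSet {c : ℕ → ℂ} (S : Set ℕ) {a b : ℂ} (ha : a ∈ rangeSet (S.indicator c))
    (hb : b ∈ rangeSet (Sᶜ.indicator c)) : a + b ∈ rangeSet c := by
  classical
  obtain ⟨x, hx, hxa⟩ := ha
  obtain ⟨y, hy, hyb⟩ := hb
  refine ⟨S.piecewise x y, fun n => ?_, (hxa.add hyb).congr fun N => ?_⟩
  · by_cases h : n ∈ S <;> simp [h, hx n, hy n]
  · rw [← sum_add_distrib]
    refine sum_congr rfl fun n _ => ?_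
    by_cases h : n ∈ S <;> simp [h]

lemma mul_mem_rangeSet {c : ℕ → ℂ} {a : ℂ} (k : ℂ) (ha : a ∈ rangeSet c) :
    k * a ∈ rangeSet (fun n => k * c n) := by
  obtain ⟨x, hx, hxa⟩ := ha
  exact ⟨x, hx, (hxa.const_mul k).congr fun N => by simp only [mul_sum, mul_left_comm]⟩

lemma Dense.of_rangeSet_const_mul {c : ℕ → ℂ} {k : ℂ} (hk : k ≠ 0)
    (h : Dense (rangeSet fun n => k * c n)) : Dense (rangeSet c) := by
  have hsurj : Function.Surjective (k⁻¹ * ·) := fun z => ⟨k * z, by field_simp⟩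
  refine (hsurj.denseRange.dense_image (continuous_const_mul _) h).mono ?_
  rintro _ ⟨a, ha, rfl⟩
  simpa [← mul_assoc, hk] using mul_mem_rangeSet k⁻¹ ha

section Greedy

variable (t : ℕ → ℝ) (τ : ℝ)

noncomputable def greedySum : ℕ → ℝ
  | 0 => 0
  | k + 1 => greedySum k + if greedySum k ≤ τ then |t k| else -|t k|

noncomputable def greedySign (k : ℕ) : ℝ :=
  if (greedySum t τ k ≤ τ ↔ 0 ≤ t k) then 1 else -1

lemma greedySign_eq (k : ℕ) : greedySign t τ k = 1 ∨ greedySign t τ k = -1 := by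
  unfold greedySign; split_ifs <;> simp

lemma greedySign_mul (k : ℕ) :
    greedySign t τ k * t k = if greedySum t τ k ≤ τ then |t k| else -|t k| := by
  unfold greedySign
  rcases le_or_gt 0 (t k) with h | h
  · split_ifs <;> simp_all [abs_of_nonneg h]
  · split_ifs <;> simp_all [abs_of_neg h, h.not_ge]

lemma sum_greedySign_mul (K : ℕ) :
    ∑ k ∈ range K, greedySign t τ k * t k = greedySum t τ K := by
  induction K with
  | zero => rfl
  | succ K ih => rw [sum_range_succ, ih, greedySign_mul]; rfl

lemma abs_greedySum_le (K : ℕ) : |greedySum t τ K| ≤ ∑ k ∈ range K, |t k| := by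
  rw [← sum_greedySign_mul]
  refine (abs_sum_le_sum_abs _ _).trans (sum_le_sum fun k _ => ?_)
  rcases greedySign_eq t τ k with h | h <;> simp [h]

lemma abs_greedySum_succ_sub_le (k : ℕ) :
    |greedySum t τ (k + 1) - τ| ≤ max (|greedySum t τ k - τ| - |t k|) |t k| := by
  simp only [greedySum]
  split_ifs with h
  · rw [abs_of_nonpos (sub_nonpos.2 h)]
    rcases le_total (|t k|) (τ - greedySum t τ k) with h' | h'
    · exact le_max_of_le_left (by rw [abs_le]; constructor <;> linarith)
    · exact le_max_of_le_right (by rw [abs_le]; constructor <;> linarith)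
  · rw [abs_of_pos (sub_pos.2 (not_le.1 h))]
    rcases le_total (|t k|) (greedySum t τ k - τ) with h' | h'
    · exact le_max_of_le_left (by rw [abs_le]; constructor <;> linarith)
    · exact le_max_of_le_right (by rw [abs_le]; constructor <;> linarith)

lemma abs_greedySum_sub_le {ε : ℝ} {j k : ℕ} (hjk : j ≤ k)
    (ht : ∀ i ∈ Ico j k, |t i| ≤ ε) :
    |greedySum t τ k - τ| ≤ max (|greedySum t τ j - τ| - ∑ i ∈ Ico j k, |t i|) ε := by
  induction k, hjk using Nat.le_induction with
  | base => simp
  | succ k hjk ih =>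
    have ih := ih fun i hi => ht i (Ico_subset_Ico_right k.le_succ hi)
    have htk := ht k (by simp [hjk])
    rw [sum_Ico_succ_top hjk]
    refine (abs_greedySum_succ_sub_le t τ k).trans (max_le ?_ (le_max_of_le_right htk))
    rcases le_max_iff.1 ih with h | h
    · exact le_max_of_le_left (by linarith)
    · exact le_max_of_le_right (by linarith [abs_nonneg (t k)])

lemma tendsto_greedySum (ht : Tendsto t atTop (𝓝 0)) (hns : ¬Summable fun k => |t k|) :
    Tendsto (greedySum t τ) atTop (𝓝 τ) := by
  rw [Metric.tendsto_atTop]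
  intro ε hε
  obtain ⟨j, hj⟩ := eventually_atTop.1 <|
    (tendsto_zero_iff_abs_tendsto_zero t).1 ht |>.eventually (ge_mem_nhds (half_pos hε))
  have hsum := (not_summable_iff_tendsto_nat_atTop_of_nonneg fun k => abs_nonneg (t k)).1 hns
  obtain ⟨K, hK⟩ := eventually_atTop.1 <| hsum.eventually_ge_atTop
    (|greedySum t τ j - τ| + ∑ i ∈ range j, |t i|)
  refine ⟨max j K, fun k hk => ?_⟩
  have hjk : j ≤ k := le_of_max_le_left hk
  have h := abs_greedySum_sub_le t τ hjk fun i hi => hj i (mem_Ico.1 hi).1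
  rw [sum_Ico_eq_sub _ hjk] at h
  have := hK k (le_of_max_le_right hk)
  rw [Real.dist_eq]
  exact h.trans_lt (max_lt (by linarith) (half_lt_self hε))

lemma exists_signs_abs_sum_sub_le {N₀ M : ℕ} (hNM : N₀ ≤ M) {ε : ℝ} (hε : 0 ≤ ε)
    (ht : ∀ i ∈ Ico N₀ M, |t i| ≤ ε) (hcap : |τ| + ∑ i ∈ range N₀, |t i| ≤ ∑ i ∈ Ico N₀ M, |t i|) :
    ∃ x : ℕ → ℝ, (∀ i, x i = 1 ∨ x i = -1) ∧ |∑ i ∈ range M, x i * t i - τ| ≤ ε := by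
  refine ⟨greedySign t τ, greedySign_eq t τ, ?_⟩
  rw [sum_greedySign_mul]
  refine (abs_greedySum_sub_le t τ hNM ht).trans (max_le ?_ le_rfl)
  have := abs_greedySum_le t τ N₀
  have := abs_sub (greedySum t τ N₀) τ
  linarith

end Greedy

lemma exists_mem_rangeSet_im_eq {t : ℕ → ℂ} (him₀ : Tendsto (fun n => (t n).im) atTop (𝓝 0))
    (him : ¬Summable fun n => |(t n).im|) (hre : Summable fun n => |(t n).re|) (v : ℝ) :
    ∃ s ∈ rangeSet t, s.im = v ∧ |s.re| ≤ ∑' n, |(t n).re| := by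
  set x := greedySign (fun n => (t n).im) v
  have hx : ∀ n, x n = 1 ∨ x n = -1 := greedySign_eq _ v
  have habs : ∀ n, |x n * (t n).re| = |(t n).re| := fun n => by
    rcases hx n with h | h <;> simp [h]
  have hsre : Summable fun n => x n * (t n).re := Summable.of_abs (by simpa only [habs] using hre)
  refine ⟨∑' n, x n * (t n).re + v * I, ⟨x, hx, ?_⟩, by simp, ?_⟩
  · have hre' := (continuous_ofReal.tendsto _).comp hsre.hasSum.tendsto_sum_nat
    have him' := (continuous_ofReal.tendsto _).comp (tendsto_greedySum _ v him₀ him)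
    refine (hre'.add (him'.mul_const I)).congr fun N => Complex.ext ?_ ?_ <;>
      simp [← sum_greedySign_mul, x, Complex.re_sum, Complex.im_sum]
  · have := norm_tsum_le_tsum_norm (f := fun n => x n * (t n).re)
      (by simpa only [Real.norm_eq_abs, habs])
    simp only [Real.norm_eq_abs, habs] at this
    simpa using this

lemma exists_relation_of_finrank_lt_card {R V ι : Type*} [Ring R] [StrongRankCondition R]
    [AddCommGroup V] [Module R V] [Module.Finite R V] (w : ι → V) {F : Finset ι}
    (h : Module.finrank R V < F.card) :
    ∃ l : ι → R, (∀ i ∉ F, l i = 0) ∧ ∑ i ∈ F, l i • w i = 0 ∧ ∃ i ∈ F, l i ≠ 0 := by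
  have hdep : ¬LinearIndependent R fun i : F => w i :=
    mt LinearIndependent.fintype_card_le_finrank (by simpa using h)
  obtain ⟨g, hg, i, hi⟩ := Fintype.not_linearIndependent_iff.1 hdep
  refine ⟨Subtype.val.extend g 0, fun j hj => ?_, ?_, i, i.2, ?_⟩
  · exact Function.extend_apply' _ _ _ (by rintro ⟨k, rfl⟩; exact hj k.2)
  · rw [← Finset.sum_coe_sort]
    simpa [Subtype.val_injective.extend_apply] using hg
  · rwa [Subtype.val_injective.extend_apply]

lemma exists_norm_add_smul_eq_one {E : Type*} [NormedAddCommGroup E] [NormedSpace ℝ E] {a b : E}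
    (ha : ‖a‖ ≤ 1) (hb : b ≠ 0) : ∃ t : ℝ, ‖a + t • b‖ = 1 := by
  have hb' : 0 < ‖b‖ := norm_pos_iff.2 hb
  have hcont : ContinuousOn (fun t : ℝ => ‖a + t • b‖) (Set.Icc 0 (2 / ‖b‖)) := by fun_prop
  have hend : 1 ≤ ‖a + (2 / ‖b‖) • b‖ := by
    have h := norm_sub_le (a + (2 / ‖b‖) • b) a
    rw [add_sub_cancel_left, norm_smul, Real.norm_of_nonneg (by positivity),
      div_mul_cancel₀ _ hb'.ne'] at h
    linarith
  obtain ⟨t, -, ht⟩ := intermediate_value_Icc (by positivity) hcont ⟨by simpa using ha, hend⟩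
  exact ⟨t, ht⟩

lemma exists_abs_add_mul_eq_one_s7 {ι : Type*} {F : Finset ι} {a b : ι → ℝ}
    (ha : ∀ i ∈ F, |a i| ≤ 1) (hb : ∃ i ∈ F, b i ≠ 0) :
    ∃ t : ℝ, (∀ i ∈ F, |a i + t * b i| ≤ 1) ∧ ∃ i ∈ F, |a i + t * b i| = 1 := by
  obtain ⟨i₀, hi₀F, hi₀⟩ := hb
  obtain ⟨t, ht⟩ := exists_norm_add_smul_eq_one (a := fun i : F => a i) (b := fun i : F => b i)
    ((pi_norm_le_iff_of_nonneg zero_le_one).2 fun i => by simpa using ha i i.2)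
    (fun h0 => hi₀ (congr_fun h0 ⟨i₀, hi₀F⟩))
  set v : F → ℝ := (fun i : F => a i) + t • fun i : F => b i
  have : Nonempty F := ⟨⟨i₀, hi₀F⟩⟩
  obtain ⟨⟨i₁, hi₁F⟩, hi₁⟩ := (IsGreatest.pi_norm v).1
  exact ⟨t, fun i hi => ht ▸ norm_le_pi_norm v ⟨i, hi⟩, i₁, hi₁F, hi₁.trans ht⟩

/-- A stage of the Bárány–Grinberg balancing argument. -/
structure IsBalancingAt (w : ℕ → ℂ) (p : ℕ) (α : ℕ → ℝ) : Prop where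
  abs_le : ∀ i, |α i| ≤ 1
  eq_zero : ∀ i, p ≤ i → α i = 0
  sum_eq_zero : ∑ i ∈ range p, (α i : ℂ) * w i = 0
  card_floating : ((range p).filter fun i => |α i| ≠ 1).card ≤ 2

namespace IsBalancingAt

variable {w : ℕ → ℂ} {p : ℕ} {α : ℕ → ℝ}

lemma zero (w : ℕ → ℂ) : IsBalancingAt w 0 0 :=
  ⟨by simp, fun _ _ => rfl, by simp, by simp⟩

lemma norm_sum_le (h : IsBalancingAt w p α) {δ : ℝ} (hw : ∀ i, ‖w i‖ ≤ δ) {x : ℕ → ℝ}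
    (hx : ∀ i, x i = 1 ∨ x i = -1) (hxα : ∀ i, |α i| = 1 → x i = α i) :
    ‖∑ i ∈ range p, (x i : ℂ) * w i‖ ≤ 4 * δ := by
  have hδ : 0 ≤ δ := (norm_nonneg _).trans (hw 0)
  have hsum : ∑ i ∈ range p, (x i : ℂ) * w i
      = ∑ i ∈ (range p).filter fun i => |α i| ≠ 1, ((x i - α i : ℝ) : ℂ) * w i := by
    rw [sum_filter_of_ne]
    · simp [sub_mul, sum_sub_distrib, h.sum_eq_zero]
    · intro i _ hi hα
      exact hi (by rw [hxα i hα, sub_self]; simp)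
  have hterm : ∀ i, ‖((x i - α i : ℝ) : ℂ) * w i‖ ≤ 2 * δ := fun i => by
    rw [norm_mul, norm_real, Real.norm_eq_abs]
    have hxi : |x i| = 1 := by rcases hx i with h | h <;> simp [h]
    have := abs_sub (x i) (α i)
    nlinarith [h.abs_le i, hw i, norm_nonneg (w i), abs_nonneg (x i - α i)]
  rw [hsum]
  refine (_root_.norm_sum_le _ _).trans ((sum_le_card_nsmul _ _ _ fun i _ => hterm i).trans ?_)
  have hcard : (((range p).filter fun i => |α i| ≠ 1).card : ℝ) ≤ 2 := by
    exact_mod_cast h.card_floating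
  rw [nsmul_eq_mul]
  nlinarith

lemma exists_succ (h : IsBalancingAt w p α) :
    ∃ β, IsBalancingAt w (p + 1) β ∧ ∀ i, |α i| = 1 → β i = α i := by
  set F := (range (p + 1)).filter fun i => |α i| ≠ 1
  have hsum : ∑ i ∈ range (p + 1), (α i : ℂ) * w i = 0 := by
    simp [sum_range_succ, h.sum_eq_zero, h.eq_zero p le_rfl]
  have hF : F.card ≤ 3 := by
    have : F = insert p ((range p).filter fun i => |α i| ≠ 1) := by
      simp [F, range_add_one, filter_insert, h.eq_zero p le_rfl]
    rw [this]
    exact (card_insert_le _ _).trans (by linarith [h.card_floating])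
  have hsupp : ∀ i, p + 1 ≤ i → α i = 0 := fun i hi => h.eq_zero i (by omega)
  by_cases hF2 : F.card ≤ 2
  · exact ⟨α, ⟨h.abs_le, hsupp, hsum, hF2⟩, fun _ _ => rfl⟩
  -- three floating coordinates in the plane are linearly dependent: move along a relation until
  -- one of them reaches `±1`
  obtain ⟨l, hlF, hl, i₀, hi₀F, hi₀⟩ :=
    exists_relation_of_finrank_lt_card (R := ℝ) w (F := F) (by rw [finrank_real_complex]; omega)
  obtain ⟨t, hle, i₁, hi₁F, hi₁⟩ :=
    exists_abs_add_mul_eq_one_s7 (fun i _ => h.abs_le i) ⟨i₀, hi₀F, hi₀⟩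
  have hfixed : ∀ i, |α i| = 1 → l i = 0 := fun i hi => hlF i (by simp [F, hi])
  refine ⟨fun i => α i + t * l i, ⟨fun i => ?_, fun i hi => ?_, ?_, ?_⟩, fun i hi => ?_⟩
  · by_cases hi : i ∈ F
    · exact hle i hi
    · simpa [hlF i hi] using h.abs_le i
  · simp [hsupp i hi, hlF i (by simp [F]; omega)]
  · have hlsum : ∑ i ∈ range (p + 1), (l i : ℂ) * w i = 0 := by
      rw [← sum_subset (show F ⊆ range (p + 1) from filter_subset _ _)
        fun i _ hi => by simp [hlF i hi]]
      simpa [Complex.real_smul] using hl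
    simp [add_mul, mul_assoc, sum_add_distrib, ← mul_sum, hsum, hlsum]
  · refine (card_le_card (t := F.erase i₁) fun i hi => ?_).trans ?_
    · simp only [mem_filter, mem_range] at hi
      by_cases hiF : i ∈ F
      · exact mem_erase.2 ⟨by rintro rfl; exact hi.2 hi₁, hiF⟩
      · have hα : |α i| = 1 := by simpa [F, hi.1] using hiF
        exact absurd (by simpa [hfixed i hα] using hα) hi.2
    · rw [card_erase_of_mem hi₁F]
      omega
  · simp [hfixed i hi]

end IsBalancingAt

theorem exists_signs_norm_sum_range_le (w : ℕ → ℂ) {δ : ℝ} (hw : ∀ i, ‖w i‖ ≤ δ) (m : ℕ) :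
    ∃ x : ℕ → ℝ, (∀ i, x i = 1 ∨ x i = -1) ∧
      ∀ p ≤ m, ‖∑ i ∈ range p, (x i : ℂ) * w i‖ ≤ 4 * δ := by
  -- coordinates equal to `±1` never move again, so signs extending those of the last stage
  -- extend those of every earlier stage
  have key : ∀ m, ∃ α, IsBalancingAt w m α ∧ ∀ x : ℕ → ℝ, (∀ i, x i = 1 ∨ x i = -1) →
      (∀ i, |α i| = 1 → x i = α i) → ∀ p ≤ m, ‖∑ i ∈ range p, (x i : ℂ) * w i‖ ≤ 4 * δ := by
    intro m
    induction m with
    | zero =>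
      refine ⟨0, .zero w, fun x _ _ p hp => ?_⟩
      simpa [Nat.le_zero.1 hp] using (norm_nonneg _).trans (hw 0)
    | succ m ih =>
      obtain ⟨α, hα, hbound⟩ := ih
      obtain ⟨β, hβ, hβα⟩ := hα.exists_succ
      refine ⟨β, hβ, fun x hx hxβ p hp => ?_⟩
      rcases Nat.le_succ_iff.1 hp with hp | rfl
      · exact hbound x hx (fun i hi => (hxβ i (by rwa [hβα i hi])).trans (hβα i hi)) p hp
      · exact hβ.norm_sum_le hw hx hxβ
  obtain ⟨α, -, hbound⟩ := key m
  have hx : ∀ i, (if |α i| = 1 then α i else 1) = 1 ∨ (if |α i| = 1 then α i else 1) = -1 :=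
    fun i => by split_ifs with h; exacts [(abs_eq zero_le_one).1 h, Or.inl rfl]
  exact ⟨_, hx, hbound _ hx fun i h => if_pos h⟩

section Blocks

variable {N : ℕ → ℕ} (hN : StrictMono N)

/-- The index `j` of the block `[N j, N (j + 1))` containing `n` (when `N 0 = 0`). -/
noncomputable def blockIndex (n : ℕ) : ℕ :=
  Nat.find (⟨n, (Nat.lt_succ_self n).trans_le (hN.id_le _)⟩ : ∃ j, n < N (j + 1))

variable {hN}

lemma lt_apply_blockIndex_succ (n : ℕ) : n < N (blockIndex hN n + 1) :=
  Nat.find_spec (p := fun j => n < N (j + 1)) _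

lemma apply_blockIndex_le (hN0 : N 0 = 0) (n : ℕ) : N (blockIndex hN n) ≤ n := by
  rcases h : blockIndex hN n with _ | j
  · simp [hN0]
  · exact not_lt.1 (Nat.find_min (p := fun j => n < N (j + 1)) _
      (show j < blockIndex hN n by omega))

lemma le_blockIndex {j n : ℕ} (h : N j ≤ n) : j ≤ blockIndex hN n := by
  by_contra! hlt
  exact (lt_apply_blockIndex_succ n).not_ge (h.trans' (hN.monotone hlt))

lemma blockIndex_eq (hN0 : N 0 = 0) {j n : ℕ} (h₁ : N j ≤ n) (h₂ : n < N (j + 1)) :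
    blockIndex hN n = j := by
  refine le_antisymm ?_ (le_blockIndex h₁)
  by_contra! hlt
  exact (apply_blockIndex_le hN0 n).not_gt (h₂.trans_le (hN.monotone hlt))

end Blocks

lemma exists_tendsto_of_norm_sub_le_on_blocks {E : Type*} [NormedAddCommGroup E] [CompleteSpace E]
    {s : ℕ → E} {N : ℕ → ℕ} (hN : StrictMono N) (hN0 : N 0 = 0) {b : ℕ → ℝ} (hb : Summable b)
    (hsb : ∀ j m, N j ≤ m → m ≤ N (j + 1) → ‖s m - s (N j)‖ ≤ b j) :
    ∃ L, Tendsto s atTop (𝓝 L) ∧ dist (s 0) L ≤ ∑' j, b j := by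
  have hstep : ∀ j, dist (s (N j)) (s (N (j + 1))) ≤ b j := fun j => by
    rw [dist_comm, dist_eq_norm]
    exact hsb j _ (hN.monotone j.le_succ) le_rfl
  obtain ⟨L, hL⟩ := cauchySeq_tendsto_of_complete <|
    cauchySeq_of_summable_dist (hb.of_nonneg_of_le (fun _ => dist_nonneg) hstep)
  have hJ : Tendsto (blockIndex hN) atTop atTop :=
    tendsto_atTop_atTop.2 fun j => ⟨N j, fun n hn => le_blockIndex hn⟩
  refine ⟨L, ?_, le_of_tendsto (tendsto_const_nhds.dist hL) (Eventually.of_forall fun j => ?_)⟩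
  · have hosc : Tendsto (fun n => s n - s (N (blockIndex hN n))) atTop (𝓝 0) :=
      squeeze_zero_norm (fun n => hsb _ n (apply_blockIndex_le hN0 n)
        (lt_apply_blockIndex_succ n).le) (hb.tendsto_atTop_zero.comp hJ)
    simpa using (hL.comp hJ).add hosc
  · calc dist (s 0) (s (N j)) ≤ ∑ i ∈ range j, dist (s (N i)) (s (N (i + 1))) := by
          simpa [hN0] using dist_le_range_sum_dist (fun i => s (N i)) j
      _ ≤ ∑ i ∈ range j, b i := sum_le_sum fun i _ => hstep i
      _ ≤ ∑' i, b i := hb.sum_le_tsum _ fun i _ => dist_nonneg.trans (hstep i)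

lemma exists_strictMono_norm_le_div_pow {E : Type*} [NormedAddCommGroup E] {w : ℕ → E}
    (hw₀ : Tendsto w atTop (𝓝 0)) {δ : ℝ} (hδ : 0 < δ) (hw : ∀ n, ‖w n‖ ≤ δ) :
    ∃ N : ℕ → ℕ, StrictMono N ∧ N 0 = 0 ∧ ∀ j n, N j ≤ n → ‖w n‖ ≤ δ / 2 ^ j := by
  obtain ⟨φ, hφ, hφw⟩ := extraction_forall_of_eventually
    (P := fun j k => 0 < k ∧ ∀ n ≥ k, ‖w n‖ ≤ δ / 2 ^ (j + 1)) fun j =>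
      (eventually_gt_atTop 0).and <| eventually_forall_ge_atTop.2 <|
        (tendsto_zero_iff_norm_tendsto_zero.1 hw₀).eventually (ge_mem_nhds (by positivity))
  refine ⟨fun | 0 => 0 | j + 1 => φ j, strictMono_nat_of_lt_succ fun j => ?_, rfl,
    fun j n hn => ?_⟩
  · cases j with
    | zero => exact (hφw 0).1
    | succ j => exact hφ j.lt_succ_self
  · cases j with
    | zero => simpa using hw n
    | succ j => exact (hφw j).2 n hn

/-- A signed version of the Dvoretzky–Hanani theorem in the plane: balancing each block where
`‖w n‖ ≤ δ / 2 ^ j` costs at most `4 δ / 2 ^ j`, and these costs add up to `8 δ`. -/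
theorem exists_mem_rangeSet_norm_le {w : ℕ → ℂ} (hw₀ : Tendsto w atTop (𝓝 0)) {δ : ℝ}
    (hδ : 0 < δ) (hw : ∀ n, ‖w n‖ ≤ δ) : ∃ s ∈ rangeSet w, ‖s‖ ≤ 8 * δ := by
  obtain ⟨N, hN, hN0, hNw⟩ := exists_strictMono_norm_le_div_pow hw₀ hδ hw
  have hblock (j : ℕ) := exists_signs_norm_sum_range_le ((Set.Ico (N j) (N (j + 1))).indicator w)
    (δ := δ / 2 ^ j) (fun i => by
      by_cases hi : i ∈ Set.Ico (N j) (N (j + 1))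
      · simpa [hi] using hNw j i hi.1
      · simp only [hi, not_false_eq_true, Set.indicator_of_notMem, norm_zero]
        positivity) (N (j + 1))
  choose xb hxb hxbw using hblock
  set x : ℕ → ℝ := fun n => xb (blockIndex hN n) n
  have hsb (j m : ℕ) (h₁ : N j ≤ m) (h₂ : m ≤ N (j + 1)) :
      ‖∑ n ∈ range m, (x n : ℂ) * w n - ∑ n ∈ range (N j), (x n : ℂ) * w n‖
        ≤ 8 * δ / 2 / 2 ^ j := by
    have hblock_sum : ∑ n ∈ range m, (x n : ℂ) * w n - ∑ n ∈ range (N j), (x n : ℂ) * w n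
        = ∑ n ∈ range m, (xb j n : ℂ) * (Set.Ico (N j) (N (j + 1))).indicator w n := by
      have hbelow : ∑ n ∈ range (N j), (xb j n : ℂ) * (Set.Ico (N j) (N (j + 1))).indicator w n
          = 0 := sum_eq_zero fun n hn => by simp [(mem_range.1 hn).not_ge]
      rw [← sum_Ico_eq_sub _ h₁, ← sum_range_add_sum_Ico _ h₁, hbelow, zero_add]
      refine sum_congr rfl fun n hn => ?_
      obtain ⟨hn₁, hn₂⟩ := mem_Ico.1 hn
      simp only [x, Set.indicator_of_mem (Set.mem_Ico.2 ⟨hn₁, hn₂.trans_le h₂⟩),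
        blockIndex_eq hN0 hn₁ (hn₂.trans_le h₂)]
    rw [hblock_sum]
    exact (hxbw j m h₂).trans_eq (by ring)
  obtain ⟨L, hL, hL8⟩ := exists_tendsto_of_norm_sub_le_on_blocks hN hN0
    (summable_geometric_two' (8 * δ)) hsb
  refine ⟨L, ⟨x, fun n => hxb _ n, hL⟩, ?_⟩
  simpa [tsum_geometric_two'] using hL8

lemma tendsto_indicator_of_tendsto_zero {α E : Type*} [NormedAddCommGroup E] {l : Filter α}
    {f : α → E} (hf : Tendsto f l (𝓝 0)) (S : Set α) : Tendsto (S.indicator f) l (𝓝 0) :=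
  squeeze_zero_norm (norm_indicator_le_norm_self f) (tendsto_zero_iff_norm_tendsto_zero.1 hf)

lemma summable_norm_of_summable_abs_re_im {ι : Type*} {f : ι → ℂ}
    (hre : Summable fun i => |(f i).re|) (him : Summable fun i => |(f i).im|) :
    Summable fun i => ‖f i‖ :=
  (hre.add him).of_nonneg_of_le (fun _ => norm_nonneg _) fun _ => norm_le_abs_re_add_abs_im _

theorem exists_mem_rangeSet_abs_re_sub_le {d : ℕ → ℂ} (hd : Tendsto d atTop (𝓝 0))
    (hre : ¬Summable fun n => |(d n).re|) (u : ℝ) {ε : ℝ} (hε : 0 < ε) :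
    ∃ s ∈ rangeSet d, |s.re - u| ≤ ε := by
  obtain ⟨N₀, hN₀⟩ := eventually_atTop.1 <|
    (tendsto_zero_iff_norm_tendsto_zero.1 hd).eventually (ge_mem_nhds hε)
  have hsum := (not_summable_iff_tendsto_nat_atTop_of_nonneg fun n => abs_nonneg (d n).re).1 hre
  -- the steering room `∑_{N₀ ≤ n < M} |Re d n|` must exceed the target `u - Re w`, where `w` is
  -- the sum over `n ≥ M`, of norm at most `8 ε` whatever `M` is
  obtain ⟨M, hM, hNM⟩ := ((hsum.eventually_ge_atTop
    (|u| + 8 * ε + 2 * ∑ n ∈ range N₀, |(d n).re|)).and (eventually_ge_atTop N₀)).exists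
  obtain ⟨w, hw, hw8⟩ := exists_mem_rangeSet_norm_le
    (tendsto_indicator_of_tendsto_zero hd (Set.Ici M)) hε fun n => by
      by_cases hn : M ≤ n
      · simpa [hn] using hN₀ n (hNM.trans hn)
      · simp [hn, hε.le]
  obtain ⟨x, hx, hxu⟩ := exists_signs_abs_sum_sub_le (fun n => (d n).re) (u - w.re) hNM hε.le
    (fun i hi => (abs_re_le_norm _).trans (hN₀ i (mem_Ico.1 hi).1)) (by
      rw [sum_Ico_eq_sub _ hNM]
      linarith [abs_re_le_norm w, abs_sub u w.re])
  refine ⟨∑ n ∈ range M, (x n : ℂ) * d n + w,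
    add_mem_rangeSet (Set.Iio M) ?_ (by rwa [Set.compl_Iio]), ?_⟩
  · convert sum_range_mem_rangeSet (c := (Set.Iio M).indicator d)
      (fun n hn => Set.indicator_of_notMem (by simpa using hn) d) hx using 1
    exact sum_congr rfl fun n hn => by simp [mem_range.1 hn]
  · convert hxu using 2
    simp only [add_re, re_sum, re_ofReal_mul]
    ring

theorem dense_rangeSet_of_summable_abs_re_subseq {c : ℕ → ℂ} (hc : Tendsto c atTop (𝓝 0))
    (hre : ¬Summable fun n => |(c n).re|) {e : ℕ → ℕ} (he : StrictMono e)
    (hns : ¬Summable fun k => ‖c (e k)‖) (hsre : Summable fun k => |(c (e k)).re|) :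
    Dense (rangeSet c) := by
  rw [Metric.dense_iff]
  intro z r hr
  obtain ⟨K, hK⟩ := ((tendsto_sum_nat_add fun k => |(c (e k)).re|).eventually
    (gt_mem_nhds (half_pos hr))).exists
  set e' : ℕ → ℕ := fun k => e (k + K)
  have he' : Function.Injective e' := fun a b hab => by simpa using he.injective hab
  set S := Set.range e'
  have habs_re (T : Set ℕ) :
      (fun n => |(T.indicator c n).re|) = T.indicator fun n => |(c n).re| :=
    (Set.indicator_comp_of_zero (g := fun z : ℂ => |z.re|) (by simp)).symm
  have habs_im (T : Set ℕ) :
      (fun n => |(T.indicator c n).im|) = T.indicator fun n => |(c n).im| :=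
    (Set.indicator_comp_of_zero (g := fun z : ℂ => |z.im|) (by simp)).symm
  have hS (f : ℕ → ℝ) : Summable (S.indicator f) ↔ Summable fun k => f (e' k) := by
    rw [← he'.summable_iff fun n hn => Set.indicator_of_notMem hn f]
    simp [Function.comp_def]
  have hre_t : Summable (S.indicator fun n => |(c n).re|) :=
    (hS _).2 ((summable_nat_add_iff K).2 hsre)
  have him_t : ¬Summable (S.indicator fun n => |(c n).im|) := by
    rw [hS, summable_nat_add_iff K (f := fun k => |(c (e k)).im|)]
    exact fun him => hns (summable_norm_of_summable_abs_re_im hsre him)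
  have hre_d : ¬Summable (Sᶜ.indicator fun n => |(c n).re|) := fun h =>
    hre <| by simpa only [← Pi.add_def, Set.indicator_self_add_compl] using hre_t.add h
  obtain ⟨s₂, hs₂, hs₂z⟩ := exists_mem_rangeSet_abs_re_sub_le
    (tendsto_indicator_of_tendsto_zero hc Sᶜ) (by rwa [habs_re]) z.re (half_pos hr)
  obtain ⟨s₁, hs₁, hs₁z, hs₁re⟩ := exists_mem_rangeSet_im_eq
    ((continuous_im.tendsto 0).comp (tendsto_indicator_of_tendsto_zero hc S) |>.trans_eq (by simp))
    (by rwa [habs_im]) (by rwa [habs_re]) (z.im - s₂.im)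
  have htsum : ∑' n, |(S.indicator c n).re| = ∑' k, |(c (e (k + K))).re| := by
    rw [habs_re, ← he'.tsum_eq Set.support_indicator_subset]
    simp [e']
  refine ⟨s₁ + s₂, ?_, add_mem_rangeSet S hs₁ hs₂⟩
  rw [Metric.mem_ball, dist_of_im_eq (by simp [hs₁z]), Real.dist_eq, add_re, add_sub_assoc]
  linarith [abs_add_le s₁.re (s₂.re - z.re)]

theorem stmt_7 (c : ℕ → ℂ) (hc : Tendsto c atTop (𝓝 0))
    (hlin : ∀ α β : ℝ, (α, β) ≠ (0, 0) →
      ¬ Summable (fun n => |α * (c n).re + β * (c n).im|))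
    (nk : ℕ → ℕ) (hmono : StrictMono nk)
    (hns : ¬ Summable (fun k => ‖c (nk k)‖))
    (hsum : Summable (fun k => |(c (nk k)).re|) ∨ Summable (fun k => |(c (nk k)).im|)) :
    Dense (rangeSet c) := by
  rcases hsum with hre | him
  · exact dense_rangeSet_of_summable_abs_re_subseq hc (by simpa using hlin 1 0 (by simp)) hmono
      hns hre
  · refine Dense.of_rangeSet_const_mul I_ne_zero <| dense_rangeSet_of_summable_abs_re_subseq
      (by simpa using hc.const_mul I) (by simpa using hlin 0 1 (by simp)) hmono (by simpa using hns)
      (by simpa using him)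
end

section
/- Let (cₙ = aₙ + ibₙ) be a sequence of complex numbers with ∑|cₙ| = ∞, cₙ → 0, and aₙ/bₙ → t for some 0 < t < ∞. Fix δ ∈ (0,1) and positive reals (η_k) with ∑ η_k < ∞. Then there exist pairwise disjoint finite sets Λ₁ < Λ₂ < ⋯ ⊆ ℕ (each Λ_k preceding Λ_{k+1}) such that for all k: |∑_{n∈Λ_k} |bₙ| - δ^k| ≤ η_k, |(∑_{n∈Λ_k} aₙ·sign(bₙ))/(∑_{n∈Λ_k} |bₙ|) - t| < η_k, and moreover ∑_{k=1}^∞ ∑_{n∈Λ_k} max(|aₙ|,|bₙ|) < ∞. -/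
/-!
Since `aₙ / bₙ → t > 0`, eventually `max |aₙ| |bₙ| ≤ (t + 1) |bₙ|`; hence `∑ |bₙ| = ∞` while
`bₙ → 0`. The `k`-th block is a run of consecutive indices, started beyond the previous block and
beyond the point where `|bₙ| < η k` and `aₙ / bₙ` is `η k / 2`-close to `t`, and stopped as soon
as `∑ |bₙ|` exceeds `δ ^ (k + 1)`, which it then overshoots by less than `η k`. On a block,
`∑ aₙ sign bₙ = ∑ (aₙ / bₙ) |bₙ|` is a weighted average of ratios close to `t`, and
`∑ max |aₙ| |bₙ| ≤ (t + 1) (δ ^ (k + 1) + η k)` is summable in `k`.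
-/

open Complex Filter Topology Finset

lemma exists_gt_lt_add_of_tendsto_atTop {f : ℕ → ℝ} {n₀ : ℕ} {T ε : ℝ}
    (hf : Tendsto f atTop atTop) (h₀ : f n₀ ≤ T) (hstep : ∀ n ≥ n₀, f (n + 1) < f n + ε) :
    ∃ n ≥ n₀, T < f n ∧ f n < T + ε := by
  have hex : ∃ m, T < f (n₀ + m) := by
    obtain ⟨N, hN⟩ := (hf.eventually_gt_atTop T).exists_forall_of_atTop
    exact ⟨N, hN _ (by omega)⟩
  obtain ⟨m, hm, hmin⟩ : ∃ m, T < f (n₀ + m) ∧ ∀ m' < m, f (n₀ + m') ≤ T :=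
    ⟨Nat.find hex, Nat.find_spec hex, fun m' hm' => not_lt.1 (Nat.find_min hex hm')⟩
  cases m with
  | zero => exact absurd hm (not_lt.2 h₀)
  | succ m =>
    rw [← add_assoc] at hm
    refine ⟨n₀ + m + 1, by omega, hm, ?_⟩
    linarith [hmin m (by omega), hstep (n₀ + m) (by omega)]

lemma exists_sum_Ico_mem_Ioo {x : ℕ → ℝ} (hx : ∀ n, 0 ≤ x n) (hdiv : ¬ Summable x) {N : ℕ}
    {T ε : ℝ} (hT : 0 ≤ T) (hsmall : ∀ n ≥ N, x n < ε) :
    ∃ j, T < ∑ n ∈ Ico N j, x n ∧ ∑ n ∈ Ico N j, x n < T + ε := by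
  set f : ℕ → ℝ := fun m => ∑ i ∈ range m, x i - ∑ i ∈ range N, x i
  have hf : Tendsto f atTop atTop :=
    tendsto_atTop_add_const_right _ _ ((not_summable_iff_tendsto_nat_atTop_of_nonneg hx).1 hdiv)
  obtain ⟨j, hj, hsum⟩ := exists_gt_lt_add_of_tendsto_atTop (n₀ := N) (T := T) (ε := ε) hf
    (by simpa [f] using hT) fun n hn => by
      simp only [f, sum_range_succ]
      linarith [hsmall n hn]
  exact ⟨j, by rwa [sum_Ico_eq_sub _ hj]⟩

lemma mul_sign_eq_div_mul_abs (a b : ℝ) : a * Real.sign b = a / b * |b| := by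
  rcases lt_trichotomy b 0 with hb | rfl | hb
  · rw [Real.sign_of_neg hb, abs_of_neg hb, mul_neg_one, mul_neg, div_mul_cancel₀ _ hb.ne]
  · simp
  · rw [Real.sign_of_pos hb, abs_of_pos hb, mul_one, div_mul_cancel₀ _ hb.ne']

lemma abs_sum_mul_sign_div_sum_abs_sub_le {ι : Type*} {s : Finset ι} {a b : ι → ℝ} {t r : ℝ}
    (hpos : 0 < ∑ n ∈ s, |b n|) (h : ∀ n ∈ s, |a n / b n - t| ≤ r) :
    |(∑ n ∈ s, a n * Real.sign (b n)) / (∑ n ∈ s, |b n|) - t| ≤ r := by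
  have key : ∑ n ∈ s, a n * Real.sign (b n) - (∑ n ∈ s, |b n|) * t
      = ∑ n ∈ s, (a n / b n - t) * |b n| := by
    rw [sum_mul, ← sum_sub_distrib]
    exact sum_congr rfl fun n _ => by rw [mul_sign_eq_div_mul_abs]; ring
  rw [div_sub' hpos.ne', abs_div, abs_of_pos hpos, div_le_iff₀ hpos, key, mul_sum]
  calc _ ≤ ∑ n ∈ s, |a n / b n - t| * |b n| := by
        simpa only [abs_mul, abs_abs] using abs_sum_le_sum_abs (fun n => (a n / b n - t) * |b n|) s
    _ ≤ ∑ n ∈ s, r * |b n| := sum_le_sum fun n hn => by gcongr; exact h n hn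

lemma eventually_abs_le_mul_abs_of_tendsto_div {α : Type*} {l : Filter α} {a b : α → ℝ}
    {t C : ℝ} (hab : Tendsto (fun n => a n / b n) l (𝓝 t)) (ht : t ≠ 0) (hC : |t| < C) :
    ∀ᶠ n in l, |a n| ≤ C * |b n| := by
  filter_upwards [hab.eventually_ne ht, hab.abs.eventually (gt_mem_nhds hC)] with n hne hlt
  have hb : b n ≠ 0 := by
    rintro h
    simp [h] at hne
  calc |a n| = |a n / b n| * |b n| := by rw [abs_div, div_mul_cancel₀ _ (abs_ne_zero.2 hb)]
    _ ≤ C * |b n| := by gcongr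

lemma not_summable_abs_im_of_eventually_max_le {c : ℕ → ℂ} {C : ℝ}
    (hns : ¬ Summable fun n => ‖c n‖)
    (hC : ∀ᶠ n in atTop, max |(c n).re| |(c n).im| ≤ C * |(c n).im|) :
    ¬ Summable fun n => |(c n).im| := by
  refine fun h => hns (.of_norm_bounded_eventually_nat (h.mul_left (2 * C)) ?_)
  filter_upwards [hC] with n hn
  rw [norm_norm]
  linarith [norm_le_abs_re_add_abs_im (c n), le_max_left |(c n).re| |(c n).im|,
    le_max_right |(c n).re| |(c n).im|]

lemma exists_block_of_tendsto_div {a b : ℕ → ℝ} {t C T ε : ℝ} (hb : ¬ Summable fun n => |b n|)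
    (hb0 : Tendsto b atTop (𝓝 0)) (hab : Tendsto (fun n => a n / b n) atTop (𝓝 t))
    (hC : ∀ᶠ n in atTop, max |a n| |b n| ≤ C * |b n|) (hC0 : 0 ≤ C) (hT : 0 ≤ T) (hε : 0 < ε)
    (s : ℕ) :
    ∃ Λ : Finset ℕ, (∀ n ∈ Λ, s ≤ n) ∧ Λ.Nonempty ∧
      |(∑ n ∈ Λ, |b n|) - T| ≤ ε ∧
      |(∑ n ∈ Λ, a n * Real.sign (b n)) / (∑ n ∈ Λ, |b n|) - t| < ε ∧
      ∑ n ∈ Λ, max |a n| |b n| ≤ C * (T + ε) := by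
  have hratio : ∀ᶠ n in atTop, |a n / b n - t| ≤ ε / 2 :=
    hab.eventually (Metric.closedBall_mem_nhds t (half_pos hε))
  have hsmall : ∀ᶠ n in atTop, |b n| < ε := by
    simpa using hb0.abs.eventually (gt_mem_nhds (show |(0 : ℝ)| < ε by simpa using hε))
  obtain ⟨N, hN⟩ :=
    (hratio.and (hsmall.and (hC.and (eventually_ge_atTop s)))).exists_forall_of_atTop
  obtain ⟨j, hlo, hhi⟩ :=
    exists_sum_Ico_mem_Ioo (fun n => abs_nonneg (b n)) hb hT fun n hn => (hN n hn).2.1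
  have hΛ : ∀ n ∈ Ico N j, _ := fun n hn => hN n (mem_Ico.1 hn).1
  have hpos : 0 < ∑ n ∈ Ico N j, |b n| := hT.trans_lt hlo
  refine ⟨Ico N j, fun n hn => (hΛ n hn).2.2.2, nonempty_of_sum_ne_zero hpos.ne', ?_, ?_, ?_⟩
  · rw [abs_le]
    constructor <;> linarith
  · calc _ ≤ ε / 2 := abs_sum_mul_sign_div_sum_abs_sub_le hpos fun n hn => (hΛ n hn).1
      _ < ε := half_lt_self hε
  · calc ∑ n ∈ Ico N j, max |a n| |b n| ≤ ∑ n ∈ Ico N j, C * |b n| :=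
          sum_le_sum fun n hn => (hΛ n hn).2.2.1
      _ = C * ∑ n ∈ Ico N j, |b n| := (mul_sum _ _ _).symm
      _ ≤ C * (T + ε) := by gcongr

lemma exists_finset_seq_lt_of_forall_exists_ge {P : ℕ → Finset ℕ → Prop}
    (h : ∀ k s, ∃ Λ : Finset ℕ, (∀ n ∈ Λ, s ≤ n) ∧ P k Λ) :
    ∃ Λ : ℕ → Finset ℕ, (∀ k, P k (Λ k)) ∧ ∀ k, ∀ i ∈ Λ k, ∀ j ∈ Λ (k + 1), i < j := by
  choose f hf_ge hf using h
  let Λ : ℕ → Finset ℕ := fun k => Nat.rec (f 0 0) (fun k Λk => f (k + 1) (Λk.sup id + 1)) k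
  refine ⟨Λ, fun k => ?_, fun k i hi j hj => ?_⟩
  · cases k <;> apply hf
  · exact (Nat.lt_succ_of_le (le_sup (f := id) hi)).trans_le (hf_ge _ _ j hj)

theorem stmt_13 (c : ℕ → ℂ) (hns : ¬ Summable (fun n => ‖c n‖))
    (hc : Tendsto c atTop (𝓝 0)) (t : ℝ) (ht0 : 0 < t)
    (hrat : Tendsto (fun n => (c n).re / (c n).im) atTop (𝓝 t))
    (δ : ℝ) (hδ0 : 0 < δ) (hδ1 : δ < 1)
    (η : ℕ → ℝ) (hη : ∀ k, 0 < η k) (hηs : Summable η) :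
    ∃ Λ : ℕ → Finset ℕ,
      (∀ k, (Λ k).Nonempty) ∧
      (∀ k, ∀ i ∈ Λ k, ∀ j ∈ Λ (k + 1), i < j) ∧
      (∀ k, |(∑ n ∈ Λ k, |(c n).im|) - δ ^ (k + 1)| ≤ η k) ∧
      (∀ k, |(∑ n ∈ Λ k, (c n).re * Real.sign ((c n).im)) / (∑ n ∈ Λ k, |(c n).im|) - t|
        < η k) ∧
      Summable (fun k => ∑ n ∈ Λ k, max |(c n).re| |(c n).im|) := by
  have hmax : ∀ᶠ n in atTop, max |(c n).re| |(c n).im| ≤ (t + 1) * |(c n).im| := by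
    filter_upwards [eventually_abs_le_mul_abs_of_tendsto_div (C := t + 1) hrat ht0.ne'
      (by rw [abs_of_pos ht0]; linarith)] with n hn
    exact max_le hn (le_mul_of_one_le_left (abs_nonneg _) (by linarith))
  have him0 : Tendsto (fun n => (c n).im) atTop (𝓝 0) := by
    simpa [Function.comp_def] using (continuous_im.tendsto 0).comp hc
  obtain ⟨Λ, hΛ, hlt⟩ := exists_finset_seq_lt_of_forall_exists_ge fun k =>
    exists_block_of_tendsto_div (not_summable_abs_im_of_eventually_max_le hns hmax) him0 hrat hmax
      (by linarith) (pow_pos hδ0 (k + 1)).le (hη k)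
  refine ⟨Λ, fun k => (hΛ k).1, hlt, fun k => (hΛ k).2.1, fun k => (hΛ k).2.2.1, ?_⟩
  have hgeom : Summable fun k => δ ^ (k + 1) :=
    (summable_nat_add_iff 1).2 (summable_geometric_of_lt_one hδ0.le hδ1)
  exact .of_nonneg_of_le (fun k => sum_nonneg fun n _ => le_max_of_le_right (abs_nonneg _))
    (fun k => (hΛ k).2.2.2) ((hgeom.add hηs).mul_left (t + 1))
end

section
/- Let cₙ = (-1)^n/(n·ln(n+1)) + i/n for n ≥ 1. Define α_k + iβ_k = -c_{4k+1} + c_{4k+2} for k ≥ 0, i.e., α_k = 1/((4k+1)ln(4k+2)) + 1/((4k+2)ln(4k+3)) and β_k = -1/((4k+1)(4k+2)). Then α_k/β_k → -∞ in the sense that |α_k/β_k| → ∞, while for the original sequence aₙ/bₙ → 0 where aₙ = (-1)^n/(n·ln(n+1)) and bₙ = 1/n. -/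
/-! Both ratios are explicit. For the original sequence, `aₙ / bₙ = (-1)ⁿ / log (n + 1)`, which tends
to `0`. For the paired sequence, multiplying out gives
`|αₖ / βₖ| = (4k+2) / log (4k+2) + (4k+1) / log (4k+3) ≥ (4k+2) / log (4k+2)`, and `x / log x → ∞`. -/

open Filter Topology Real

lemma Real.tendsto_div_log_atTop : Tendsto (fun x : ℝ => x / log x) atTop atTop :=
  ((tendsto_exp_div_pow_atTop 1).comp tendsto_log_atTop).congr' <| by
    filter_upwards [eventually_gt_atTop 0] with x hx using by simp [exp_log hx]

lemma abs_paired_ratio_eq {x : ℝ} (hx : 0 ≤ x) :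
    |(1 / ((4 * x + 1) * log (4 * x + 2)) + 1 / ((4 * x + 2) * log (4 * x + 3)))
        / -(1 / ((4 * x + 1) * (4 * x + 2)))|
      = (4 * x + 2) / log (4 * x + 2) + (4 * x + 1) / log (4 * x + 3) := by
  have h₂ : 0 < log (4 * x + 2) := log_pos (by linarith)
  have h₃ : 0 < log (4 * x + 3) := log_pos (by linarith)
  rw [div_neg, abs_neg, abs_of_pos (by positivity)]
  field_simp

lemma div_log_le_abs_paired_ratio {x : ℝ} (hx : 0 ≤ x) :
    (4 * x + 2) / log (4 * x + 2)
      ≤ |(1 / ((4 * x + 1) * log (4 * x + 2)) + 1 / ((4 * x + 2) * log (4 * x + 3)))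
        / -(1 / ((4 * x + 1) * (4 * x + 2)))| := by
  rw [abs_paired_ratio_eq hx, le_add_iff_nonneg_right]
  exact div_nonneg (by linarith) (log_nonneg (by linarith))

lemma abs_alternating_ratio_eq (n : ℕ) :
    |(-1) ^ n / (n * log (n + 1)) / (1 / n)| = (log (n + 1))⁻¹ := by
  rcases n.eq_zero_or_pos with rfl | hn
  · simp -- both sides are `0`, by the junk value `x / 0 = 0` and `log 1 = 0`
  have hlog : 0 < log (n + 1) := log_pos (by norm_cast; omega)
  have hratio : (-1) ^ n / (n * log (n + 1)) / (1 / n) = (-1) ^ n / log (n + 1) := by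
    field_simp
  rw [hratio, abs_div, abs_of_pos hlog, abs_pow, abs_neg, abs_one, one_pow, one_div]

theorem stmt_16
    (a b α β : ℕ → ℝ)
    (ha : ∀ n, a n = (-1) ^ n / (n * Real.log (n + 1)))
    (hb : ∀ n, b n = 1 / n)
    (hα : ∀ k, α k = 1 / ((4 * k + 1) * Real.log (4 * k + 2))
                    + 1 / ((4 * k + 2) * Real.log (4 * k + 3)))
    (hβ : ∀ k, β k = -(1 / ((4 * k + 1) * (4 * k + 2)))) :
    Tendsto (fun k => |α k / β k|) atTop atTop ∧
    Tendsto (fun n => a n / b n) atTop (𝓝 0) := by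
  constructor
  · have h4k2 : Tendsto (fun k : ℕ => 4 * (k : ℝ) + 2) atTop atTop :=
      tendsto_atTop_add_const_right _ _
        (tendsto_natCast_atTop_atTop.const_mul_atTop (by norm_num))
    refine tendsto_atTop_mono (fun k => ?_) (tendsto_div_log_atTop.comp h4k2)
    simpa only [hα, hβ, Function.comp_apply] using div_log_le_abs_paired_ratio k.cast_nonneg
  · have hlog : Tendsto (fun n : ℕ => log (n + 1)) atTop atTop :=
      tendsto_log_atTop.comp (tendsto_atTop_add_const_right _ _ tendsto_natCast_atTop_atTop)
    refine squeeze_zero_norm (fun n => ?_) hlog.inv_tendsto_atTop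
    rw [ha, hb, norm_eq_abs, abs_alternating_ratio_eq, Pi.inv_apply]
end

section
/- Let (m_k)_{k≥0} and (n_k)_{k≥0} be strictly increasing sequences of nonnegative integers with m₀ = n₀ = 0 and n_{k+1} ≥ n_k + m_k + 3 for all k ≥ 0. Suppose (l_k)_{k≥1} is a sequence of integers such that the series ∑_k l_k 2^{-m_k} converges (so in particular |l_k 2^{-m_k}| ≤ 1 for all sufficiently large k). Then ∑_{k=1}^∞ l_k 2^{-m_k - n_k} ∈ ⋃_{n=1}^∞ 2^{-n}(ℤ + [-1/4, 1/4]). -/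
open Filter Topology Finset

/-!
Eventually `|l k / 2 ^ m k| ≤ 1`, so the `k`-th term of the series is at most `2 ^ (-n k)` in
absolute value. Cut the series after a late index `K` and put `j = m K + n K`. The exponents
`m k + n k` increase, so `2 ^ j` times the partial sum is an integer; by the gap condition
`j + 3 ≤ n (K + 1)`, the tail is at most `2 * 2 ^ (-n (K + 1)) ≤ 2 ^ (-j) / 4`.
-/

lemma sum_Icc_one_eq_sum_range {M : Type*} [AddCommMonoid M] (f : ℕ → M) (K : ℕ) :
    ∑ k ∈ Icc 1 K, f k = ∑ i ∈ range K, f (i + 1) := by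
  rw [← Ico_add_one_right_eq_Icc, sum_Ico_eq_sum_range, add_tsub_cancel_right]
  simp only [add_comm]

lemma tendsto_zero_of_tendsto_sum_range {G : Type*} [AddCommGroup G] [TopologicalSpace G]
    [IsTopologicalAddGroup G] {g : ℕ → G} {S : G}
    (h : Tendsto (fun K => ∑ i ∈ range K, g i) atTop (𝓝 S)) : Tendsto g atTop (𝓝 0) := by
  have := (h.comp (tendsto_add_atTop_nat 1)).sub h
  rw [sub_self] at this
  simpa [Function.comp_def, sum_range_succ] using this

section GeometricDomination

variable {x : ℕ → ℝ} {d : ℕ → ℕ}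

lemma norm_le_of_abs_le_inv_two_pow (hd : StrictMono d) (hx : ∀ k, |x k| ≤ 1 / 2 ^ d k)
    (k : ℕ) : ‖x k‖ ≤ 2 / 2 ^ d 0 / 2 / 2 ^ k := by
  calc ‖x k‖ ≤ 1 / 2 ^ d k := hx k
    _ ≤ 1 / 2 ^ (k + d 0) := by gcongr; exacts [one_le_two, hd.add_le_nat k 0]
    _ = 2 / 2 ^ d 0 / 2 / 2 ^ k := by rw [pow_add]; field_simp

lemma summable_of_abs_le_inv_two_pow (hd : StrictMono d) (hx : ∀ k, |x k| ≤ 1 / 2 ^ d k) :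
    Summable x :=
  (hasSum_geometric_two' _).summable.of_norm_bounded (norm_le_of_abs_le_inv_two_pow hd hx)

lemma abs_tsum_le_of_abs_le_inv_two_pow (hd : StrictMono d) (hx : ∀ k, |x k| ≤ 1 / 2 ^ d k) :
    |∑' k, x k| ≤ 2 / 2 ^ d 0 :=
  tsum_of_norm_bounded (hasSum_geometric_two' _) (norm_le_of_abs_le_inv_two_pow hd hx)

end GeometricDomination

lemma exists_int_two_pow_mul_sum_eq (l : ℕ → ℤ) (e : ℕ → ℕ) (s : Finset ℕ) (N : ℕ)
    (he : ∀ k ∈ s, e k ≤ N) : ∃ p : ℤ, 2 ^ N * ∑ k ∈ s, (l k : ℝ) / 2 ^ e k = p := by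
  refine ⟨∑ k ∈ s, l k * 2 ^ (N - e k), ?_⟩
  push_cast
  rw [mul_sum]
  refine sum_congr rfl fun k hk => ?_
  rw [pow_sub₀ _ two_ne_zero (he k hk)]
  field_simp

def NearDyadic (x : ℝ) : Prop := ∃ j : ℕ, 1 ≤ j ∧ ∃ p : ℤ, |2 ^ j * x - p| ≤ 1 / 4

section Lacunary

variable {m n : ℕ → ℕ} {l : ℕ → ℤ}

lemma strictMono_of_gap (hgap : ∀ k, n k + m k + 3 ≤ n (k + 1)) : StrictMono n :=
  strictMono_nat_of_lt_succ fun k => by have := hgap k; omega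

lemma monotone_add_of_gap (hgap : ∀ k, n k + m k + 3 ≤ n (k + 1)) :
    Monotone fun k => m k + n k :=
  monotone_nat_of_le_succ fun k => by have := hgap k; omega

lemma abs_div_two_pow_add_le {k : ℕ} (hl : |(l k : ℝ) / 2 ^ m k| ≤ 1) :
    |(l k : ℝ) / 2 ^ (m k + n k)| ≤ 1 / 2 ^ n k := by
  rw [pow_add, ← div_div, abs_div, abs_pow, abs_two]
  gcongr

lemma summable_tail_and_abs_tsum_tail_le (hgap : ∀ k, n k + m k + 3 ≤ n (k + 1)) {K : ℕ}
    (hl : ∀ k ≥ K, |(l k : ℝ) / 2 ^ m k| ≤ 1) :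
    Summable (fun i => (l (i + K) : ℝ) / 2 ^ (m (i + K) + n (i + K))) ∧
      |∑' i, (l (i + K) : ℝ) / 2 ^ (m (i + K) + n (i + K))| ≤ 2 / 2 ^ n K := by
  have hd : StrictMono fun i => n (i + K) :=
    (strictMono_of_gap hgap).comp fun _ _ h => Nat.add_lt_add_right h K
  have hx (i : ℕ) := abs_div_two_pow_add_le (n := n) (hl (i + K) (Nat.le_add_left K i))
  exact ⟨summable_of_abs_le_inv_two_pow hd hx, by
    simpa using abs_tsum_le_of_abs_le_inv_two_pow hd hx⟩

theorem summable_and_nearDyadic_tsum (hgap : ∀ k, n k + m k + 3 ≤ n (k + 1))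
    (hl : ∀ᶠ k in atTop, |(l k : ℝ) / 2 ^ m k| ≤ 1) :
    Summable (fun k => (l k : ℝ) / 2 ^ (m k + n k)) ∧
      NearDyadic (∑' k, (l k : ℝ) / 2 ^ (m k + n k)) := by
  obtain ⟨K, hK⟩ := eventually_atTop.1 hl
  obtain ⟨htail, htail_le⟩ :=
    summable_tail_and_abs_tsum_tail_le hgap (K := K + 2) fun k hk => hK k (by omega)
  have hsum :=
    (summable_nat_add_iff (f := fun k => (l k : ℝ) / 2 ^ (m k + n k)) (K + 2)).1 htail
  set j := m (K + 1) + n (K + 1)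
  refine ⟨hsum, j, ?_, ?_⟩
  · have : n 0 + m 0 + 3 ≤ n 1 := hgap 0
    have := (strictMono_of_gap hgap).monotone (Nat.le_add_left 1 K)
    omega
  obtain ⟨p, hp⟩ := exists_int_two_pow_mul_sum_eq l (fun k => m k + n k) (range (K + 2)) j
    fun k hk => monotone_add_of_gap hgap (Nat.lt_succ_iff.1 (mem_range.1 hk))
  refine ⟨p, ?_⟩
  rw [← hsum.sum_add_tsum_nat_add (K + 2), mul_add, hp, add_sub_cancel_left, abs_mul, abs_pow,
    abs_two]
  calc 2 ^ j * |∑' i, (l (i + (K + 2)) : ℝ) / 2 ^ (m (i + (K + 2)) + n (i + (K + 2)))|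
      ≤ 2 ^ j * (2 / 2 ^ n (K + 2)) := by gcongr
    _ ≤ 2 ^ j * (2 / 2 ^ (j + 3)) := by
      gcongr
      · exact one_le_two
      · have : n (K + 1) + m (K + 1) + 3 ≤ n (K + 2) := hgap (K + 1)
        omega
    _ = 1 / 4 := by rw [pow_add 2 j 3]; field_simp; norm_num

end Lacunary

theorem stmt_17_general (m n : ℕ → ℕ)
    (hgap : ∀ k, n k + m k + 3 ≤ n (k + 1))
    (l : ℕ → ℤ)
    (hconv : ∃ S : ℝ, Tendsto (fun K => ∑ k ∈ Finset.Icc 1 K, (l k : ℝ) / 2 ^ m k)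
      atTop (𝓝 S)) :
    ∃ T : ℝ, Tendsto (fun K => ∑ k ∈ Finset.Icc 1 K, (l k : ℝ) / 2 ^ (m k + n k))
        atTop (𝓝 T) ∧
      T ∈ {x : ℝ | ∃ j : ℕ, 1 ≤ j ∧ ∃ p : ℤ, |2 ^ j * x - p| ≤ 1 / 4} := by
  obtain ⟨S, hS⟩ := hconv
  simp only [sum_Icc_one_eq_sum_range] at hS ⊢
  have hl : ∀ᶠ k in atTop, |(l (k + 1) : ℝ) / 2 ^ m (k + 1)| ≤ 1 :=
    ((tendsto_zero_of_tendsto_sum_range hS).abs.eventually_lt_const (by simp)).mono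
      fun _ => le_of_lt
  obtain ⟨hsum, hnear⟩ := summable_and_nearDyadic_tsum (fun k => hgap (k + 1)) hl
  exact ⟨_, hsum.hasSum.tendsto_sum_nat, hnear⟩

theorem stmt_17 (m n : ℕ → ℕ) (hm : StrictMono m) (hn : StrictMono n)
    (hm0 : m 0 = 0) (hn0 : n 0 = 0)
    (hgap : ∀ k, n k + m k + 3 ≤ n (k + 1))
    (l : ℕ → ℤ)
    (hconv : ∃ S : ℝ, Tendsto (fun K => ∑ k ∈ Finset.Icc 1 K, (l k : ℝ) / 2 ^ m k)
      atTop (𝓝 S)) :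
    ∃ T : ℝ, Tendsto (fun K => ∑ k ∈ Finset.Icc 1 K, (l k : ℝ) / 2 ^ (m k + n k))
        atTop (𝓝 T) ∧
      T ∈ {x : ℝ | ∃ j : ℕ, 1 ≤ j ∧ ∃ p : ℤ, |2 ^ j * x - p| ≤ 1 / 4} :=
  stmt_17_general m n hgap l hconv
end

section
/- Equip {-1,1}^ℕ with the metric d((xₙ),(yₙ)) = 2^{-k} where k is the first index at which the sequences differ (and d = 0 if equal). Let Λ ⊆ ℕ with upper density D̄(Λ) := limsup_k #(Λ ∩ [0,k])/k < ε for some 0 < ε < 1, and let h_Λ : {-1,1}^ℕ → {-1,1}^ℕ be the map deleting the coordinates indexed by Λ. Then for every B ⊆ {-1,1}^ℕ, (1-ε)·dim_H(h_Λ(B)) ≤ dim_H(B), where dim_H denotes Hausdorff dimension with respect to d. -/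
/-!
If `x` and `y` first differ at index `n`, then `h_Λ x` and `h_Λ y` agree on the first
`#((ℕ \ Λ) ∩ [0, n))` coordinates, and the density bound makes this count at least `(1 - ε) n`
for large `n`. So `h_Λ` is Hölder continuous with exponent `1 - ε`, and a Hölder map of
exponent `r` can increase Hausdorff dimension by a factor at most `1 / r`.
-/

open Filter Topology Set

attribute [local instance] PiNat.metricSpace

/-- Deleting the coordinates indexed by `Λ` and reindexing by the increasing
enumeration of `ℕ \ Λ`. -/
noncomputable def deleteCoords (Λ : Set ℕ) (x : ℕ → Bool) : ℕ → Bool :=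
  fun k => x (Nat.nth (· ∉ Λ) k)

open scoped NNReal ENNReal

section Holder

variable {X Y : Type*}

theorem holderWith_of_dist_le [PseudoMetricSpace X] [PseudoMetricSpace Y] {C r : ℝ≥0}
    {f : X → Y} (h : ∀ x y, dist (f x) (f y) ≤ C * dist x y ^ (r : ℝ)) : HolderWith C r f := by
  intro x y
  rw [edist_dist, edist_dist, ENNReal.ofReal_rpow_of_nonneg dist_nonneg r.coe_nonneg,
    ← ENNReal.ofReal_coe_nnreal, ← ENNReal.ofReal_mul C.coe_nonneg]
  exact ENNReal.ofReal_le_ofReal (h x y)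

theorem HolderWith.mul_dimH_image_le [EMetricSpace X] [EMetricSpace Y] {C r : ℝ≥0}
    {f : X → Y} (h : HolderWith C r f) (s : Set X) : (r : ℝ≥0∞) * dimH (f '' s) ≤ dimH s := by
  rcases eq_zero_or_pos r with rfl | hr
  · simp
  calc (r : ℝ≥0∞) * dimH (f '' s) ≤ r * (dimH s / r) := by gcongr; exact h.dimH_image_le hr s
    _ ≤ dimH s := ENNReal.mul_div_le

end Holder

section DeleteCoords

variable (Λ : Set ℕ)

theorem isBoundedUnder_ncard_inter_Iic_div :
    IsBoundedUnder (· ≤ ·) atTop (fun k : ℕ => ((Λ ∩ Iic k).ncard : ℝ) / k) := by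
  refine isBoundedUnder_of_eventually_le (a := 2) ?_
  filter_upwards [eventually_ge_atTop 1] with k hk
  have hcard : (Λ ∩ Iic k).ncard ≤ k + 1 := by
    simpa using Set.ncard_le_ncard inter_subset_right (finite_Iic k)
  have hk' : (1 : ℝ) ≤ k := by exact_mod_cast hk
  rw [div_le_iff₀ (by positivity)]
  have : ((Λ ∩ Iic k).ncard : ℝ) ≤ k + 1 := by exact_mod_cast hcard
  linarith

variable [DecidablePred (· ∈ Λ)]

theorem le_count_not_mem_add_ncard_inter_Iic (n : ℕ) :
    n ≤ Nat.count (· ∉ Λ) n + (Λ ∩ Iic n).ncard := by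
  have hΛ : ((Finset.range n).filter (· ∈ Λ) : Set ℕ) ⊆ Λ ∩ Iic n := fun k hk => by
    simp only [Finset.coe_filter, Finset.mem_range, mem_ofPred_eq] at hk
    exact ⟨hk.2, hk.1.le⟩
  have hcard := Set.ncard_le_ncard hΛ ((finite_Iic n).inter_of_right Λ)
  rw [ncard_coe_finset] at hcard
  have hsplit := Finset.card_filter_add_card_filter_not (s := Finset.range n) (· ∈ Λ)
  rw [Finset.card_range] at hsplit
  rw [Nat.count_eq_card_filter_range]
  omega

theorem exists_mul_le_count_not_mem_of_limsup_lt {ε : ℝ}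
    (hdens : limsup (fun k : ℕ => ((Λ ∩ Iic k).ncard : ℝ) / k) atTop < ε) :
    ∃ N, ∀ n ≥ N, (1 - ε) * n ≤ Nat.count (· ∉ Λ) n := by
  have hlt := eventually_lt_of_limsup_lt hdens (isBoundedUnder_ncard_inter_Iic_div Λ)
  obtain ⟨N, hN⟩ := (hlt.and (eventually_ge_atTop 1)).exists_forall_of_atTop
  refine ⟨N, fun n hn => ?_⟩
  obtain ⟨hdiv, hpos⟩ := hN n hn
  rw [div_lt_iff₀ (by exact_mod_cast hpos)] at hdiv
  have hsplit : (n : ℝ) ≤ Nat.count (· ∉ Λ) n + (Λ ∩ Iic n).ncard := by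
    exact_mod_cast le_count_not_mem_add_ncard_inter_Iic Λ n
  linarith

theorem count_not_mem_firstDiff_le_firstDiff_deleteCoords {x y : ℕ → Bool}
    (h : deleteCoords Λ x ≠ deleteCoords Λ y) :
    Nat.count (· ∉ Λ) (PiNat.firstDiff x y) ≤
      PiNat.firstDiff (deleteCoords Λ x) (deleteCoords Λ y) :=
  le_of_not_gt fun hlt => PiNat.apply_firstDiff_ne h <|
    PiNat.apply_eq_of_lt_firstDiff (x := x) (y := y) (Nat.nth_lt_of_lt_count hlt)

theorem holderWith_deleteCoords {r : ℝ≥0} {N : ℕ}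
    (hcount : ∀ n ≥ N, r * n ≤ Nat.count (· ∉ Λ) n) :
    HolderWith ((2 : ℝ≥0) ^ ((r : ℝ) * N)) r (deleteCoords Λ) := by
  refine holderWith_of_dist_le fun x y => ?_
  rcases eq_or_ne (deleteCoords Λ x) (deleteCoords Λ y) with heq | hne
  · rw [heq, dist_self]
    positivity
  have hxy : x ≠ y := fun h => hne (h ▸ rfl)
  set n := PiNat.firstDiff x y
  set F := PiNat.firstDiff (deleteCoords Λ x) (deleteCoords Λ y)
  have hexp : r * n ≤ F + r * N := by
    have hF := count_not_mem_firstDiff_le_firstDiff_deleteCoords Λ hne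
    rcases le_or_gt N n with hNn | hnN
    · have : (Nat.count (· ∉ Λ) n : ℝ) ≤ F := by exact_mod_cast hF
      have : (0 : ℝ) ≤ r * N := by positivity
      linarith [hcount n hNn]
    · have : (n : ℝ) ≤ N := by exact_mod_cast hnN.le
      have := mul_le_mul_of_nonneg_left this r.coe_nonneg
      linarith [F.cast_nonneg (α := ℝ)]
  have half_pow (m : ℕ) : (1 / 2 : ℝ) ^ m = 2 ^ (-(m : ℝ)) := by
    rw [one_div, inv_pow, ← Real.rpow_natCast, ← Real.rpow_neg zero_le_two]
  rw [PiNat.dist_eq_of_ne hne, PiNat.dist_eq_of_ne hxy, half_pow, half_pow, NNReal.coe_rpow,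
    NNReal.coe_ofNat, ← Real.rpow_mul zero_le_two, ← Real.rpow_add zero_lt_two]
  exact Real.rpow_le_rpow_of_exponent_le one_le_two (by linarith)

end DeleteCoords

theorem stmt_18_general (Λ : Set ℕ) (ε : ℝ)
    (hdens : Filter.limsup (fun k => ((Λ ∩ Set.Iic k).ncard : ℝ) / k) atTop < ε)
    (B : Set (ℕ → Bool)) :
    ENNReal.ofReal (1 - ε) * dimH (deleteCoords Λ '' B) ≤ dimH B := by
  classical
  obtain ⟨N, hN⟩ := exists_mul_le_count_not_mem_of_limsup_lt Λ hdens
  have hcount : ∀ n ≥ N, (1 - ε).toNNReal * (n : ℝ) ≤ Nat.count (· ∉ Λ) n := fun n hn => by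
    rw [Real.coe_toNNReal']
    rcases le_total 0 (1 - ε) with h | h
    · rw [max_eq_left h]; exact hN n hn
    · rw [max_eq_right h, zero_mul]; positivity
  -- `ENNReal.ofReal (1 - ε)` is by definition `↑(1 - ε).toNNReal`
  exact (holderWith_deleteCoords Λ hcount).mul_dimH_image_le B

theorem stmt_18 (Λ : Set ℕ) (ε : ℝ) (hε0 : 0 < ε) (hε1 : ε < 1)
    (hdens : Filter.limsup (fun k => ((Λ ∩ Set.Iic k).ncard : ℝ) / k) atTop < ε)
    (B : Set (ℕ → Bool)) :
    ENNReal.ofReal (1 - ε) * dimH (deleteCoords Λ '' B) ≤ dimH B :=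
  stmt_18_general Λ ε hdens B
end
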